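/- arXiv:1104.3348 — 5 statements merged into one kernel-verified Lean document; each statement's English description precedes it below -/
import Mathlib

section
/- Let G be an MDP with target set T, and let Q be a subset of S such that there is no path in the graph (S,E) from any state of Q to any state of T. Then for every state s in the random attractor Attr_R(Q) and every player-1 strategy sigma, Pr_s^sigma(Buchi(T)) < 1; in particular Attr_R(Q) is disjoint from Win_as(Buchi(T)). -/
open scoped ENNReal
open MeasureTheory

/-- A Markov decision process over a finite state space `S`:
`E` gives the (nonempty) set of successors of each state, `isP1 s = true` marks
player-1 states (otherwise `s` is a random state), and `δ` is the probabilistic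
transition function at random states, supported exactly on the edges. -/
structure MDP (S : Type*) [Fintype S] [DecidableEq S] where
  E : S → Finset S
  E_nonempty : ∀ s, (E s).Nonempty
  isP1 : S → Bool
  δ : S → S → ℝ≥0∞
  δ_sum : ∀ s, isP1 s = false → ∑ t, δ s t = 1
  δ_support : ∀ s t, isP1 s = false → (δ s t ≠ 0 ↔ t ∈ E s)

variable {S : Type*} [Fintype S] [DecidableEq S]

/-- Cylinder set of plays whose first coordinates are given by the list `l`. -/
def Cyl (l : List S) : Set (ℕ → S) := {ω | ∀ i : Fin l.length, ω i.val = l.get i}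

/-- Plays that visit some state of `T`. -/
def ReachEvent (T : Set S) : Set (ℕ → S) := {ω | ∃ i, ω i ∈ T}

/-- Plays that visit some state of `T` within the first `j` steps. -/
def ReachWithin (T : Set S) (j : ℕ) : Set (ℕ → S) := {ω | ∃ i ≤ j, ω i ∈ T}

/-- Plays in which some state of `T` occurs infinitely often (Büchi objective). -/
def BuchiEvent (T : Set S) : Set (ℕ → S) := {ω | ∃ t ∈ T, {i : ℕ | ω i = t}.Infinite}

/-- The set of states occurring infinitely often in a play. -/
def InfOcc (ω : ℕ → S) : Set S := {t | {i : ℕ | ω i = t}.Infinite}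

/-- Parity objective: the minimum priority occurring infinitely often is even. -/
def ParityEvent (p : S → ℕ) : Set (ℕ → S) := {ω | Even (sInf (p '' InfOcc ω))}

namespace MDP

/-- A (history-dependent, randomized) player-1 strategy `σ hist s t` gives the
probability of moving to `t` from the player-1 state `s` after history `hist`
(the sequence of states strictly before `s`): it is a probability distribution
supported on the successors of `s`. -/
def IsStrategy (G : MDP S) (σ : List S → S → S → ℝ≥0∞) : Prop :=
  (∀ w s, G.isP1 s = true → ∑ t, σ w s t = 1) ∧
  (∀ w s t, G.isP1 s = true → σ w s t ≠ 0 → t ∈ G.E s)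

/-- A pure memoryless strategy: it deterministically follows a function `f`
choosing a successor of each state. -/
def IsPureMemoryless (G : MDP S) (σ : List S → S → S → ℝ≥0∞) : Prop :=
  ∃ f : S → S, (∀ s, f s ∈ G.E s) ∧ σ = fun _ s t => if t = f s then 1 else 0

/-- One-step transition probability under strategy `σ` after history `hist`. -/
noncomputable def step (G : MDP S) (σ : List S → S → S → ℝ≥0∞) (hist : List S) (s t : S) : ℝ≥0∞ :=
  if G.isP1 s then σ hist s t else G.δ s t

/-- Probability that the play follows the given finite sequence of states,
given the history `hist` of states before it. -/
noncomputable def pathProb (G : MDP S) (σ : List S → S → S → ℝ≥0∞) : List S → List S → ℝ≥0∞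
  | _, [] => 1
  | _, [_] => 1
  | hist, s :: t :: rest => G.step σ hist s t * pathProb G σ (hist ++ [s]) (t :: rest)

/-- Probability that the play started at `s` begins with the finite sequence `l`. -/
noncomputable def cylWeight (G : MDP S) (σ : List S → S → S → ℝ≥0∞) (s : S) : List S → ℝ≥0∞
  | [] => 1
  | t :: rest => if t = s then G.pathProb σ [] (t :: rest) else 0

open scoped Classical in
/-- `G.Pr σ s Φ` is the probability of the event `Φ ⊆ (ℕ → S)` (a set of plays)
when the play starts at `s` and player 1 follows `σ`: it is the Kolmogorov
(Carathéodory) outer measure generated by the cylinder probabilities. -/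
noncomputable def Pr (G : MDP S) (σ : List S → S → S → ℝ≥0∞) (s : S)
    (Φ : Set (ℕ → S)) : ℝ≥0∞ :=
  (OuterMeasure.ofFunction
    (fun A : Set (ℕ → S) =>
      if A = ∅ then 0 else ⨅ (l : List S) (_ : A = Cyl l), G.cylWeight σ s l)
    (by simp)) Φ

/-- The almost-sure winning set of player 1 for objective `Φ`. -/
def winAS (G : MDP S) (Φ : Set (ℕ → S)) : Set S :=
  {s | ∃ σ, G.IsStrategy σ ∧ G.Pr σ s Φ = 1}

def attrRIter (G : MDP S) (U : Set S) : ℕ → Set S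
  | 0 => U
  | i + 1 =>
      attrRIter G U i
        ∪ {s | G.isP1 s = false ∧ ∃ t ∈ G.E s, t ∈ attrRIter G U i}
        ∪ {s | G.isP1 s = true ∧ ∀ t ∈ G.E s, t ∈ attrRIter G U i}

/-- The random attractor of `U`. -/
def attrR (G : MDP S) (U : Set S) : Set S := ⋃ i, attrRIter G U i

def attr1Iter (G : MDP S) (U : Set S) : ℕ → Set S
  | 0 => U
  | i + 1 =>
      attr1Iter G U i
        ∪ {s | G.isP1 s = true ∧ ∃ t ∈ G.E s, t ∈ attr1Iter G U i}
        ∪ {s | G.isP1 s = false ∧ ∀ t ∈ G.E s, t ∈ attr1Iter G U i}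

/-- The player-1 attractor of `U`. -/
def attr1 (G : MDP S) (U : Set S) : Set S := ⋃ i, attr1Iter G U i

/-- There is a path from `s` to `t` in the graph of the MDP. -/
def Reaches (G : MDP S) (s t : S) : Prop :=
  Relation.ReflTransGen (fun a b => b ∈ G.E a) s t

/-- There is a path from `s` to `t` all of whose steps stay inside `W`. -/
def ReachesIn (G : MDP S) (W : Set S) (s t : S) : Prop :=
  Relation.ReflTransGen (fun a b => b ∈ G.E a ∧ b ∈ W) s t

end MDP

open scoped Classical

namespace MDPAux

variable {S : Type*} [Fintype S] [DecidableEq S]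
variable (G : MDP S) (σ : List S → S → S → ℝ≥0∞)

lemma stepSum (hσ : G.IsStrategy σ) (hist : List S) (s : S) :
    ∑ t, G.step σ hist s t = 1 := by
  unfold MDP.step
  cases h : G.isP1 s with
  | true => simp only [h, if_pos]; exact hσ.1 hist s h
  | false => simp only [h, Bool.false_eq_true, if_false]; exact G.δ_sum s h

lemma step_support (hσ : G.IsStrategy σ) (hist : List S) (s t : S)
    (h : G.step σ hist s t ≠ 0) : t ∈ G.E s := by
  unfold MDP.step at h
  cases hp : G.isP1 s with
  | true => rw [if_pos hp] at h; exact hσ.2 hist s t hp h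
  | false => rw [hp] at h; simp at h; exact (G.δ_support s t hp).1 h

lemma pathProb_cons_cons (hist : List S) (s t : S) (rest : List S) :
    G.pathProb σ hist (s :: t :: rest)
      = G.step σ hist s t * G.pathProb σ (hist ++ [s]) (t :: rest) := rfl

lemma pathProb_single (hist : List S) (s : S) : G.pathProb σ hist [s] = 1 := rfl

/-- Lemma A: total probability of all length-(M+1) continuations is 1. -/
lemma sum_pathProb (hσ : G.IsStrategy σ) :
    ∀ (M : ℕ) (hist : List S) (s : S),
      ∑ v : Fin M → S, G.pathProb σ hist (s :: List.ofFn v) = 1 := by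
  intro M
  induction M with
  | zero => intro hist s; simp [pathProb_single]
  | succ M ih =>
    intro hist s
    rw [← Equiv.sum_comp (Fin.consEquiv fun _ : Fin (M+1) => S)]
    rw [Fintype.sum_prod_type]
    have : ∀ (t : S) (w : Fin M → S),
        G.pathProb σ hist (s :: List.ofFn ((Fin.consEquiv fun _ => S) (t, w)))
          = G.step σ hist s t * G.pathProb σ (hist ++ [s]) (t :: List.ofFn w) := by
      intro t w
      have : List.ofFn ((Fin.consEquiv fun _ => S) (t, w)) = t :: List.ofFn w := by
        simp [Fin.consEquiv, List.ofFn_succ]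
      rw [this, pathProb_cons_cons]
    simp only [this, ← Finset.mul_sum]
    simp only [ih (hist ++ [s])]
    simpa using stepSum G σ hσ hist s

/-- Lemma B: pathProb of a nonempty list equals the sum over its extensions. -/
lemma pathProb_eq_sum_ext (hσ : G.IsStrategy σ) (M : ℕ) :
    ∀ (l : List S) (hist : List S), l ≠ [] →
      G.pathProb σ hist l = ∑ v : Fin M → S, G.pathProb σ hist (l ++ List.ofFn v) := by
  intro l
  induction l with
  | nil => intro hist h; exact absurd rfl h
  | cons a rest ih =>
    intro hist _
    cases rest with
    | nil => simpa [pathProb_single] using (sum_pathProb G σ hσ M hist a).symm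
    | cons b r =>
      have : ∀ v : Fin M → S,
          G.pathProb σ hist ((a :: b :: r) ++ List.ofFn v)
            = G.step σ hist a b * G.pathProb σ (hist ++ [a]) ((b :: r) ++ List.ofFn v) := by
        intro v; rfl
      simp only [this, ← Finset.mul_sum]
      rw [← ih (hist ++ [a]) (by simp), pathProb_cons_cons]

/-- nonzero pathProb implies the list is an edge path. -/
lemma chain_of_pathProb_ne_zero (hσ : G.IsStrategy σ) :
    ∀ (l : List S) (hist : List S), G.pathProb σ hist l ≠ 0 →
      List.Chain' (fun a b => b ∈ G.E a) l := by
  intro l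
  induction l with
  | nil => intro _ _; exact List.isChain_nil
  | cons a rest ih =>
    intro hist h
    cases rest with
    | nil => exact List.isChain_singleton a
    | cons b r =>
      rw [pathProb_cons_cons] at h
      rcases mul_ne_zero_iff.1 h with ⟨h1, h2⟩
      exact List.isChain_cons_cons.2 ⟨step_support G σ hσ hist a b h1, ih (hist ++ [a]) h2⟩

end MDPAux

namespace MDPAux

variable {S : Type*} [Fintype S] [DecidableEq S]
variable (G : MDP S) (σ : List S → S → S → ℝ≥0∞)

/-- minimal positive transition probability (capped at 1). -/
noncomputable def eps (G : MDP S) : ℝ≥0∞ :=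
  min 1 (Finset.univ.inf fun p : S × S =>
    if G.isP1 p.1 = false ∧ G.δ p.1 p.2 ≠ 0 then G.δ p.1 p.2 else 1)

lemma eps_le_one : eps G ≤ 1 := min_le_left _ _

lemma eps_ne_zero : eps G ≠ 0 := by
  have : (0 : ℝ≥0∞) < eps G := by
    apply lt_min one_pos
    rw [Finset.lt_inf_iff (by simp : (0:ℝ≥0∞) < ⊤)]
    intro p _
    split
    · next h => exact pos_iff_ne_zero.2 h.2
    · exact one_pos
  exact this.ne'

lemma eps_le_delta {s t : S} (hp : G.isP1 s = false) (h : G.δ s t ≠ 0) :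
    eps G ≤ G.δ s t := by
  refine le_trans (min_le_right _ _) ?_
  refine le_trans (Finset.inf_le (Finset.mem_univ (s, t))) ?_
  rw [if_pos ⟨hp, h⟩]

variable (Q : Set S)

/-- probability of hitting `Q` within the first `n` steps. -/
noncomputable def hitSum (n : ℕ) (hist : List S) (s : S) : ℝ≥0∞ :=
  ∑ v : Fin n → S,
    if (∃ x ∈ s :: List.ofFn v, x ∈ Q) then G.pathProb σ hist (s :: List.ofFn v) else 0

lemma hitSum_of_mem (hσ : G.IsStrategy σ) (n : ℕ) (hist : List S) {s : S} (hs : s ∈ Q) :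
    hitSum G σ Q n hist s = 1 := by
  unfold hitSum
  have : ∀ v : Fin n → S, (∃ x ∈ s :: List.ofFn v, x ∈ Q) := fun v => ⟨s, by simp, hs⟩
  rw [Finset.sum_congr rfl fun v _ => if_pos (this v)]
  exact sum_pathProb G σ hσ n hist s

lemma hitSum_succ (n : ℕ) (hist : List S) {s : S} (hs : s ∉ Q) :
    hitSum G σ Q (n+1) hist s
      = ∑ t, G.step σ hist s t * hitSum G σ Q n (hist ++ [s]) t := by
  unfold hitSum
  rw [← Equiv.sum_comp (Fin.consEquiv fun _ : Fin (n+1) => S), Fintype.sum_prod_type]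
  refine Finset.sum_congr rfl fun t _ => ?_
  rw [Finset.mul_sum]
  refine Finset.sum_congr rfl fun w _ => ?_
  have hl : List.ofFn ((Fin.consEquiv fun _ => S) (t, w)) = t :: List.ofFn w := by
    simp [Fin.consEquiv, List.ofFn_succ]
  rw [hl, pathProb_cons_cons, mul_ite, mul_zero]
  congr 1
  · simp only [eq_iff_iff]
    constructor
    · rintro ⟨x, hx, hxQ⟩
      rcases List.mem_cons.1 hx with rfl | hx
      · exact absurd hxQ hs
      · exact ⟨x, hx, hxQ⟩
    · rintro ⟨x, hx, hxQ⟩; exact ⟨x, List.mem_cons_of_mem _ hx, hxQ⟩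

lemma hitSum_mono (hσ : G.IsStrategy σ) :
    ∀ (n : ℕ) (hist : List S) (s : S),
      hitSum G σ Q n hist s ≤ hitSum G σ Q (n+1) hist s := by
  intro n
  induction n with
  | zero =>
    intro hist s
    by_cases hs : s ∈ Q
    · rw [hitSum_of_mem G σ Q hσ 0 hist hs, hitSum_of_mem G σ Q hσ 1 hist hs]
    · have : hitSum G σ Q 0 hist s = 0 := by
        unfold hitSum
        simp only [List.ofFn_zero]
        rw [Finset.sum_eq_zero]
        intro v _
        rw [if_neg]
        rintro ⟨x, hx, hxQ⟩
        simp at hx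
        subst hx; exact hs hxQ
      simp [this]
  | succ n ih =>
    intro hist s
    by_cases hs : s ∈ Q
    · rw [hitSum_of_mem G σ Q hσ _ hist hs, hitSum_of_mem G σ Q hσ _ hist hs]
    · rw [hitSum_succ G σ Q n hist hs, hitSum_succ G σ Q (n+1) hist hs]
      exact Finset.sum_le_sum fun t _ => mul_le_mul_right (ih (hist ++ [s]) t) _

/-- Lemma D: from the `n`-th attractor iterate, `Q` is hit within `n` steps
with probability at least `eps^n`. -/
lemma attr_hitSum (hσ : G.IsStrategy σ) :
    ∀ (n : ℕ) (s : S), s ∈ G.attrRIter Q n → ∀ hist,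
      eps G ^ n ≤ hitSum G σ Q n hist s := by
  intro n
  induction n with
  | zero =>
    intro s hs hist
    rw [hitSum_of_mem G σ Q hσ 0 hist hs]
    simp
  | succ n ih =>
    intro s hs hist
    by_cases hsQ : s ∈ Q
    · rw [hitSum_of_mem G σ Q hσ _ hist hsQ]
      exact pow_le_one' (eps_le_one G) _
    rcases hs with (hs | hs) | hs
    · -- s ∈ attrRIter n
      calc eps G ^ (n+1) = eps G ^ n * eps G := pow_succ _ _
        _ ≤ eps G ^ n * 1 := mul_le_mul_right (eps_le_one G) _
        _ = eps G ^ n := mul_one _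
        _ ≤ hitSum G σ Q n hist s := ih s hs hist
        _ ≤ hitSum G σ Q (n+1) hist s := hitSum_mono G σ Q hσ n hist s
    · -- random state with a successor in the iterate
      obtain ⟨hp, t, htE, ht⟩ := hs
      rw [hitSum_succ G σ Q n hist hsQ]
      have hstep : G.step σ hist s t = G.δ s t := by
        unfold MDP.step; simp [hp]
      have hδ : G.δ s t ≠ 0 := (G.δ_support s t hp).2 htE
      calc eps G ^ (n+1) = eps G * eps G ^ n := by rw [pow_succ, mul_comm]
        _ ≤ G.δ s t * hitSum G σ Q n (hist ++ [s]) t :=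
            mul_le_mul' (eps_le_delta G hp hδ) (ih t ht (hist ++ [s]))
        _ = G.step σ hist s t * hitSum G σ Q n (hist ++ [s]) t := by rw [hstep]
        _ ≤ ∑ u, G.step σ hist s u * hitSum G σ Q n (hist ++ [s]) u :=
            Finset.single_le_sum (f := fun u => G.step σ hist s u * hitSum G σ Q n (hist ++ [s]) u)
              (fun u _ => zero_le) (Finset.mem_univ t)
    · -- player-1 state with all successors in the iterate
      obtain ⟨hp, hall⟩ := hs
      rw [hitSum_succ G σ Q n hist hsQ]
      have hstep : ∀ u, G.step σ hist s u = σ hist s u := by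
        intro u; unfold MDP.step; simp [hp]
      have : ∀ u, σ hist s u * eps G ^ n ≤ G.step σ hist s u * hitSum G σ Q n (hist ++ [s]) u := by
        intro u
        rw [hstep u]
        by_cases hu : σ hist s u = 0
        · simp [hu]
        · exact mul_le_mul_right (ih u (hall u (hσ.2 hist s u hp hu)) (hist ++ [s])) _
      calc eps G ^ (n+1) ≤ eps G ^ n := by
            rw [pow_succ]
            exact mul_le_of_le_one_right' (eps_le_one G)
        _ = (∑ u, σ hist s u) * eps G ^ n := by rw [hσ.1 hist s hp, one_mul]
        _ = ∑ u, σ hist s u * eps G ^ n := by rw [Finset.sum_mul]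
        _ ≤ _ := Finset.sum_le_sum fun u _ => this u

end MDPAux

namespace MDPAux

variable {S : Type*} [Fintype S] [DecidableEq S]
variable (G : MDP S) (σ : List S → S → S → ℝ≥0∞)

omit [Fintype S] [DecidableEq S] in
lemma exists_ofFn {M : ℕ} (t : List S) (h : t.length = M) :
    ∃ w : Fin M → S, List.ofFn w = t := by
  subst h; exact ⟨t.get, List.ofFn_get t⟩

/-- Lemma C: a prefix-free family of paths starting at `s` has total weight ≤ 1. -/
lemma prefixfree_sum_le_one (hσ : G.IsStrategy σ) (M : ℕ) (s : S) (P : Finset (List S))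
    (hhead : ∀ l ∈ P, l.head? = some s)
    (hlen : ∀ l ∈ P, l.length ≤ M + 1)
    (hpf : ∀ l ∈ P, ∀ l' ∈ P, l ≠ l' → ¬ l <+: l') :
    ∑ l ∈ P, G.pathProb σ [] l ≤ 1 := by
  classical
  have hne : ∀ l ∈ P, l ≠ [] := by
    intro l hl h
    have := hhead l hl
    rw [h] at this
    simp at this
  set ext : List S → Finset (List S) :=
    fun l => Finset.image (fun v : Fin (M + 1 - l.length) → S => l ++ List.ofFn v)
      Finset.univ with hext
  have hsum_ext : ∀ l ∈ P, ∑ m ∈ ext l, G.pathProb σ [] m = G.pathProb σ [] l := by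
    intro l hl
    rw [hext, Finset.sum_image (by
      intro v _ v' _ h
      exact List.ofFn_inj.1 (List.append_cancel_left h))]
    exact (pathProb_eq_sum_ext G σ hσ _ l [] (hne l hl)).symm
  have hmem_ext : ∀ l m, m ∈ ext l → l <+: m := by
    intro l m hm
    rw [hext] at hm
    simp only [Finset.mem_image] at hm
    obtain ⟨v, _, rfl⟩ := hm
    exact ⟨List.ofFn v, rfl⟩
  have hdisj : (P : Set (List S)).PairwiseDisjoint ext := by
    intro l hl l' hl' hne'
    simp only [Function.onFun]
    rw [Finset.disjoint_left]
    intro m hm hm'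
    rcases List.prefix_or_prefix_of_prefix (hmem_ext l m hm) (hmem_ext l' m hm') with h | h
    · exact hpf l hl l' hl' hne' h
    · exact hpf l' hl' l hl (Ne.symm hne') h
  calc ∑ l ∈ P, G.pathProb σ [] l
      = ∑ l ∈ P, ∑ m ∈ ext l, G.pathProb σ [] m :=
        (Finset.sum_congr rfl hsum_ext).symm
    _ = ∑ m ∈ P.biUnion ext, G.pathProb σ [] m := (Finset.sum_biUnion hdisj).symm
    _ ≤ ∑ m ∈ Finset.image (fun v : Fin M → S => s :: List.ofFn v) Finset.univ,
          G.pathProb σ [] m := by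
        apply Finset.sum_le_sum_of_subset
        intro m hm
        rw [Finset.mem_biUnion] at hm
        obtain ⟨l, hl, hm⟩ := hm
        rw [hext] at hm
        simp only [Finset.mem_image] at hm ⊢
        obtain ⟨v, _, rfl⟩ := hm
        obtain ⟨a, t, rfl⟩ : ∃ a t, l = a :: t := by
          cases l with
          | nil => exact absurd rfl (hne _ hl)
          | cons a t => exact ⟨a, t, rfl⟩
        have ha : a = s := by have := hhead _ hl; simpa using this
        subst ha
        have hlen' : (t ++ List.ofFn v).length = M := by
          have h1 := hlen _ hl
          simp at h1 ⊢
          omega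
        obtain ⟨w, hw⟩ := exists_ofFn (t ++ List.ofFn v) hlen'
        exact ⟨w, Finset.mem_univ w, by rw [hw]; rfl⟩
    _ = ∑ v : Fin M → S, G.pathProb σ [] (s :: List.ofFn v) := by
        rw [Finset.sum_image (by
          intro v _ v' _ h
          exact List.ofFn_inj.1 (by injection h))]
    _ = 1 := sum_pathProb G σ hσ M [] s

end MDPAux

namespace MDPAux

variable {S : Type*} [Fintype S] [DecidableEq S]

lemma cylWeight_cons (G : MDP S) (σ : List S → S → S → ℝ≥0∞) (s t : S) (rest : List S) :
    G.cylWeight σ s (t :: rest) = if t = s then G.pathProb σ [] (t :: rest) else 0 := rfl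

lemma reach_of_pathProb (G : MDP S) (σ : List S → S → S → ℝ≥0∞) (hσ : G.IsStrategy σ)
    (d : S) (l : List S) (hl : G.pathProb σ [] l ≠ 0) :
    ∀ j, ∀ i ≤ j, j < l.length → G.Reaches (l.getD i d) (l.getD j d) := by
  have hch := chain_of_pathProb_ne_zero G σ hσ l [] hl
  intro j
  induction j with
  | zero =>
    intro i hi _
    interval_cases i
    exact Relation.ReflTransGen.refl
  | succ j ih =>
    intro i hi hj
    rcases Nat.lt_succ_iff_lt_or_eq.1 (Nat.lt_succ_of_le hi) with h | h
    · have hjl : j < l.length - 1 := by omega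
      have hedge : l.get ⟨j, by omega⟩ ∈ G.E (l.get ⟨j, by omega⟩) → True := fun _ => trivial
      have hstep : (l.get ⟨j+1, by omega⟩) ∈ G.E (l.get ⟨j, by omega⟩) :=
        List.isChain_iff_getElem.1 hch j (by omega)
      have e1 : l.getD j d = l.get ⟨j, by omega⟩ := by
        rw [List.getD_eq_getElem l d (by omega)]; rfl
      have e2 : l.getD (j+1) d = l.get ⟨j+1, by omega⟩ := by
        rw [List.getD_eq_getElem l d (by omega)]; rfl
      refine Relation.ReflTransGen.tail (ih i (by omega) (by omega)) ?_
      rw [e1, e2]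
      exact hstep
    · subst h
      exact Relation.ReflTransGen.refl

lemma pr_lt_one (G : MDP S) (T Q : Set S)
    (hQ : ∀ q ∈ Q, ∀ t ∈ T, ¬ G.Reaches q t)
    (s : S) (hs : s ∈ G.attrR Q)
    (σ : List S → S → S → ℝ≥0∞) (hσ : G.IsStrategy σ) :
    G.Pr σ s (BuchiEvent T) < 1 := by
  classical
  obtain ⟨n, hsn⟩ : ∃ n, s ∈ G.attrRIter Q n := by
    simpa [MDP.attrR] using hs
  set d := s with hd
  set F : Set (List S) := {l : List S | n + 2 ≤ l.length ∧ l.getD (l.length - 1) d ∈ T ∧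
      ∀ j, n + 1 ≤ j → j < l.length - 1 → l.getD j d ∉ T} with hF
  -- the cover
  have hcover : BuchiEvent T ⊆ ⋃ l : F, Cyl (l : List S) := by
    rintro ω ⟨t, htT, hinf⟩
    have hex : ∃ j, n + 1 ≤ j ∧ ω j ∈ T := by
      obtain ⟨b, hb, hlt⟩ := hinf.exists_gt n
      exact ⟨b, hlt, by rw [Set.mem_setOf_eq] at hb; rw [hb]; exact htT⟩
    set i0 := Nat.find hex with hi0
    have hspec := Nat.find_spec hex
    set l : List S := List.ofFn (fun k : Fin (i0 + 1) => ω k) with hldef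
    have hllen : l.length = i0 + 1 := by simp [hldef]
    have hfind : n + 1 ≤ i0 := hspec.1
    have hgetD : ∀ j, j < i0 + 1 → l.getD j d = ω j := by
      intro j hj
      have hjl : j < l.length := by rw [hllen]; omega
      rw [List.getD_eq_getElem l d hjl]
      simp only [hldef, List.getElem_ofFn]
    have hlF : l ∈ F := by
      refine ⟨by rw [hllen]; omega, ?_, ?_⟩
      · rw [hllen]
        simp only [Nat.add_sub_cancel]
        rw [hgetD i0 (by omega)]
        exact hspec.2
      · intro j hj1 hj2
        rw [hllen] at hj2
        simp only [Nat.add_sub_cancel] at hj2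
        rw [hgetD j (by omega)]
        intro hT
        exact Nat.find_min hex hj2 ⟨hj1, hT⟩
    refine Set.mem_iUnion.2 ⟨⟨l, hlF⟩, ?_⟩
    intro i
    show ω i.val = l.get i
    have hil : (i.val : ℕ) < l.length := i.isLt
    have hlt : i.val < i0 + 1 := by omega
    rw [List.get_eq_getElem, ← List.getD_eq_getElem l d hil, hgetD i.val hlt]
  -- basic Pr bounds
  have hPrmono : G.Pr σ s (BuchiEvent T) ≤ G.Pr σ s (⋃ l : F, Cyl (l : List S)) := by
    unfold MDP.Pr
    exact OuterMeasure.mono _ hcover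
  have hPrunion : G.Pr σ s (⋃ l : F, Cyl (l : List S))
      ≤ ∑' l : F, G.Pr σ s (Cyl (l : List S)) := by
    unfold MDP.Pr
    exact measure_iUnion_le _
  have hcylne : ∀ l : List S, (Cyl l : Set (ℕ → S)).Nonempty := by
    intro l
    refine ⟨fun k => l.getD k d, fun i => ?_⟩
    show l.getD i.val d = l.get i
    rw [List.getD_eq_getElem l d i.isLt]
    rfl
  have hPrcyl : ∀ l : List S, G.Pr σ s (Cyl l) ≤ G.cylWeight σ s l := by
    intro l
    unfold MDP.Pr
    refine le_trans (OuterMeasure.ofFunction_le _) ?_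
    rw [if_neg (Set.nonempty_iff_ne_empty.1 (hcylne l))]
    exact iInf_le_of_le l (iInf_le _ rfl)
  -- the main estimate on the total weight of the cover
  have key : ∑' l : F, G.cylWeight σ s (l : List S) ≤ 1 - eps G ^ n := by
    rw [ENNReal.tsum_eq_iSup_sum]
    refine iSup_le fun K => ?_
    set J : Finset (List S) := K.image Subtype.val with hJ
    have hsumKJ : ∑ x ∈ K, G.cylWeight σ s (x : List S) = ∑ l ∈ J, G.cylWeight σ s l := by
      rw [hJ, Finset.sum_image (fun a _ b _ h => Subtype.ext h)]
    have hJF : ∀ l ∈ J, l ∈ F := by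
      intro l hl
      rw [hJ, Finset.mem_image] at hl
      obtain ⟨x, _, rfl⟩ := hl
      exact x.2
    set P : Finset (List S) := J.filter (fun l => G.cylWeight σ s l ≠ 0) with hPdef
    have hsumJP : ∑ l ∈ J, G.cylWeight σ s l = ∑ l ∈ P, G.cylWeight σ s l :=
      (Finset.sum_filter_ne_zero J).symm
    have hPF : ∀ l ∈ P, l ∈ F := fun l hl => hJF l (Finset.mem_of_mem_filter l hl)
    have hPw0 : ∀ l ∈ P, G.cylWeight σ s l ≠ 0 := by
      intro l hl; exact (Finset.mem_filter.1 hl).2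
    have hPlen : ∀ l ∈ P, n + 2 ≤ l.length := fun l hl => (hPF l hl).1
    have hPhead : ∀ l ∈ P, l.head? = some s := by
      intro l hl
      cases l with
      | nil => have := hPlen [] hl; simp at this
      | cons a r =>
        have hw := hPw0 _ hl
        rw [cylWeight_cons] at hw
        by_cases ha : a = s
        · rw [ha]; rfl
        · rw [if_neg ha] at hw; exact absurd rfl hw
    have hPpp : ∀ l ∈ P, G.pathProb σ [] l = G.cylWeight σ s l := by
      intro l hl
      cases l with
      | nil => have := hPlen [] hl; simp at this
      | cons a r =>
        have ha : a = s := by have := hPhead _ hl; simpa using this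
        rw [cylWeight_cons, if_pos ha]
    set H : Finset (List S) := Finset.image (fun v : Fin n → S => s :: List.ofFn v)
      (Finset.univ.filter fun v => ∃ x ∈ s :: List.ofFn v, x ∈ Q) with hHdef
    have hHmem : ∀ l ∈ H, ∃ v : Fin n → S, l = s :: List.ofFn v ∧ ∃ x ∈ l, x ∈ Q := by
      intro l hl
      rw [hHdef, Finset.mem_image] at hl
      obtain ⟨v, hv, rfl⟩ := hl
      exact ⟨v, rfl, (Finset.mem_filter.1 hv).2⟩
    have hHlen : ∀ l ∈ H, l.length = n + 1 := by
      intro l hl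
      obtain ⟨v, rfl, -⟩ := hHmem l hl
      simp
    have hHsum : ∑ l ∈ H, G.pathProb σ [] l = hitSum G σ Q n [] s := by
      rw [hHdef, Finset.sum_image (by
        intro v _ v' _ h
        exact List.ofFn_inj.1 (by injection h))]
      rw [Finset.sum_filter]
      rfl
    have hdisj : Disjoint P H := by
      rw [Finset.disjoint_left]
      intro l hlP hlH
      have := hPlen l hlP
      have := hHlen l hlH
      omega
    -- prefix-freeness of P ∪ H
    have hgetD_prefix : ∀ (a b : List S), a <+: b → ∀ j, j < a.length →
        a.getD j d = b.getD j d := by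
      intro a b hab j hj
      rw [List.getD_eq_getElem a d hj,
        List.getD_eq_getElem b d (lt_of_lt_of_le hj hab.length_le),
        hab.getElem hj]
    have hpf : ∀ l ∈ P ∪ H, ∀ l' ∈ P ∪ H, l ≠ l' → ¬ l <+: l' := by
      intro l hl l' hl' hne hpre
      have hlenle := hpre.length_le
      have hlenlt : l.length < l'.length := by
        rcases lt_or_eq_of_le hlenle with h | h
        · exact h
        · exact absurd (hpre.eq_of_length h) hne
      rcases Finset.mem_union.1 hl with hlP | hlH <;>
        rcases Finset.mem_union.1 hl' with hl'P | hl'H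
      · -- both in P : contradicts "no T before the end" condition of l'
        obtain ⟨hlen1, hlast1, -⟩ := hPF l hlP
        obtain ⟨hlen2, -, hmid2⟩ := hPF l' hl'P
        refine hmid2 (l.length - 1) (by omega) (by omega) ?_
        rw [← hgetD_prefix l l' hpre (l.length - 1) (by omega)]
        exact hlast1
      · -- l ∈ P, l' ∈ H : impossible by length
        have := hPlen l hlP
        have := hHlen l' hl'H
        omega
      · -- l ∈ H, l' ∈ P : path from Q to T, contradiction
        obtain ⟨v, hlv, x, hxl, hxQ⟩ := hHmem l hlH
        obtain ⟨i, hi⟩ := List.mem_iff_get.1 hxl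
        obtain ⟨hlen2, hlast2, -⟩ := hPF l' hl'P
        have hppne : G.pathProb σ [] l' ≠ 0 := by
          rw [hPpp l' hl'P]; exact hPw0 l' hl'P
        have hx1 : l.getD i.val d = x := by
          rw [List.getD_eq_getElem l d i.isLt, ← hi]; rfl
        have hx2 : l'.getD i.val d = x := by
          rw [← hgetD_prefix l l' hpre i.val i.isLt]; exact hx1
        have hreach := reach_of_pathProb G σ hσ d l' hppne (l'.length - 1) i.val
          (by have := i.isLt; omega) (by omega)
        rw [hx2] at hreach
        exact hQ x hxQ _ hlast2 hreach
      · -- both in H : same length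
        have := hHlen l hlH
        have := hHlen l' hl'H
        omega
    have hhead : ∀ l ∈ P ∪ H, l.head? = some s := by
      intro l hl
      rcases Finset.mem_union.1 hl with h | h
      · exact hPhead l h
      · obtain ⟨v, rfl, -⟩ := hHmem l h; rfl
    set M : ℕ := (P ∪ H).sup List.length with hM
    have hlen : ∀ l ∈ P ∪ H, l.length ≤ M + 1 := by
      intro l hl
      exact le_trans (Finset.le_sup (f := List.length) hl) (Nat.le_succ M)
    have hC := prefixfree_sum_le_one G σ hσ M s (P ∪ H) hhead hlen hpf
    rw [Finset.sum_union hdisj] at hC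
    have hhit : eps G ^ n ≤ hitSum G σ Q n [] s := attr_hitSum G σ Q hσ n s hsn []
    have hadd : (∑ l ∈ P, G.cylWeight σ s l) + eps G ^ n ≤ 1 := by
      calc (∑ l ∈ P, G.cylWeight σ s l) + eps G ^ n
          = (∑ l ∈ P, G.pathProb σ [] l) + eps G ^ n := by
            rw [Finset.sum_congr rfl hPpp]
        _ ≤ (∑ l ∈ P, G.pathProb σ [] l) + hitSum G σ Q n [] s := by
            exact add_le_add_right hhit _
        _ = (∑ l ∈ P, G.pathProb σ [] l) + ∑ l ∈ H, G.pathProb σ [] l := by rw [hHsum]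
        _ ≤ 1 := hC
    rw [hsumKJ, hsumJP]
    exact ENNReal.le_sub_of_add_le_right (ENNReal.pow_ne_top
      (ne_top_of_le_ne_top ENNReal.one_ne_top (eps_le_one G))) hadd
  have hfinal : G.Pr σ s (BuchiEvent T) ≤ 1 - eps G ^ n :=
    le_trans hPrmono (le_trans hPrunion (le_trans (ENNReal.tsum_le_tsum fun l => hPrcyl l) key))
  refine lt_of_le_of_lt hfinal ?_
  exact ENNReal.sub_lt_self ENNReal.one_ne_top one_ne_zero
    (pow_ne_zero n (eps_ne_zero G))

end MDPAux

/-- If no state of `Q` has a path to any state of `T`, then from every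
state of the random attractor of `Q`, every strategy satisfies the Büchi objective
with probability < 1; in particular the random attractor of `Q` is disjoint from
the almost-sure winning set. -/
theorem stmt1 {S : Type*} [Fintype S] [DecidableEq S] (G : MDP S) (T Q : Set S)
    (hQ : ∀ q ∈ Q, ∀ t ∈ T, ¬ G.Reaches q t) :
    (∀ s ∈ G.attrR Q, ∀ σ, G.IsStrategy σ → G.Pr σ s (BuchiEvent T) < 1) ∧
    Disjoint (G.attrR Q) (G.winAS (BuchiEvent T)) := by
  constructor
  · intro s hs σ hσ
    exact MDPAux.pr_lt_one G T Q hQ s hs σ hσ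
  · rw [Set.disjoint_left]
    intro s hs hw
    obtain ⟨σ, hσ, hPr⟩ := hw
    exact absurd hPr (ne_of_lt (MDPAux.pr_lt_one G T Q hQ s hs σ hσ))
end

section
/- Let G be an MDP with target set T, and let W be a subset of S satisfying: (i) for every random state s in W, E(s) is contained in W; (ii) for every player-1 state s in W, E(s) meets W; (iii) every state of W has a path inside W to some state of T intersected with W. Then W is contained in Win_as(Buchi(T)); moreover there is a single pure memoryless player-1 strategy sigma* such that from every state s in W, the play under sigma* never leaves W and Pr_s^{sigma*}(Buchi(T)) = 1. -/
open scoped ENNReal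
open MeasureTheory

variable {S : Type*} [Fintype S] [DecidableEq S]

section Aux
open scoped Classical
variable {S : Type*} [Fintype S] [DecidableEq S]

noncomputable def wtl (π : S → S → ℝ≥0∞) : S → List S → ℝ≥0∞
  | _, [] => 1
  | s, t :: r => π s t * wtl π t r

noncomputable def SumA (π : S → S → ℝ≥0∞) (Tset : Set S) : ℕ → ℕ → S → ℝ≥0∞
  | 0, 0, _ => 1
  | 0, m+1, s => ∑ t, if t ∈ Tset then 0 else π s t * SumA π Tset 0 m t
  | a+1, m, s => ∑ t, π s t * SumA π Tset a m t

@[simp] lemma wtl_nil (π : S → S → ℝ≥0∞) (s : S) : wtl π s [] = 1 := rfl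

@[simp] lemma wtl_cons (π : S → S → ℝ≥0∞) (s t : S) (r : List S) :
    wtl π s (t :: r) = π s t * wtl π t r := rfl

lemma SumA_zero_zero (π : S → S → ℝ≥0∞) (Tset : Set S) (s : S) :
    SumA π Tset 0 0 s = 1 := by simp [SumA]

lemma SumA_avoid_succ (π : S → S → ℝ≥0∞) (Tset : Set S) (m : ℕ) (s : S) :
    SumA π Tset 0 (m+1) s = ∑ t, if t ∈ Tset then 0 else π s t * SumA π Tset 0 m t := by
  rw [SumA]

lemma SumA_free_succ (π : S → S → ℝ≥0∞) (Tset : Set S) (a m : ℕ) (s : S) :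
    SumA π Tset (a+1) m s = ∑ t, π s t * SumA π Tset a m t := by
  rw [SumA]

lemma sum_fn_succ {m : ℕ} (F : (Fin (m+1) → S) → ℝ≥0∞) :
    ∑ b : Fin (m+1) → S, F b = ∑ t : S, ∑ b : Fin m → S, F (Fin.cons t b) := by
  rw [← (Fin.consEquiv (fun _ : Fin (m+1) => S)).sum_comp F, Fintype.sum_prod_type]
  rfl

lemma ofFn_cons {m : ℕ} (t : S) (b : Fin m → S) :
    List.ofFn (Fin.cons t b : Fin (m+1) → S) = t :: List.ofFn b := by
  rw [List.ofFn_succ]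
  simp

lemma wtl_total (π : S → S → ℝ≥0∞) (hπ : ∀ s, ∑ t, π s t = 1) :
    ∀ (n : ℕ) (s : S), ∑ b : Fin n → S, wtl π s (List.ofFn b) = 1 := by
  intro n
  induction n with
  | zero => intro s; rw [Fintype.sum_unique]; simp [List.ofFn_zero]
  | succ m ih =>
    intro s
    rw [sum_fn_succ]
    have h : ∀ t : S, ∑ b : Fin m → S, wtl π s (List.ofFn (Fin.cons t b)) = π s t := by
      intro t
      simp only [ofFn_cons, wtl_cons]
      rw [← Finset.mul_sum, ih t, mul_one]
    simp only [h]
    exact hπ s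

lemma wtl_prefix (π : S → S → ℝ≥0∞) (hπ : ∀ s, ∑ t, π s t = 1) :
    ∀ (r : List S) (n : ℕ) (s : S), r.length ≤ n →
      (∑ b : Fin n → S, if r <+: List.ofFn b then wtl π s (List.ofFn b) else 0)
        = wtl π s r := by
  classical
  intro r
  induction r with
  | nil =>
    intro n s _
    simp only [List.nil_prefix, if_true]
    exact wtl_total π hπ n s
  | cons t r ih =>
    intro n s hlen
    cases n with
    | zero => simp at hlen
    | succ m =>
      rw [sum_fn_succ]
      have hm : r.length ≤ m := by simpa using hlen
      calc ∑ u : S, ∑ b : Fin m → S,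
            (if t :: r <+: List.ofFn (Fin.cons u b) then wtl π s (List.ofFn (Fin.cons u b)) else 0)
          = ∑ u : S, (if t = u then
              (∑ b : Fin m → S, if r <+: List.ofFn b then π s u * wtl π u (List.ofFn b) else 0) else 0) := by
            refine Finset.sum_congr rfl (fun u _ => ?_)
            by_cases hu : t = u
            · subst hu
              simp only [if_pos rfl, ofFn_cons, List.cons_prefix_cons, true_and, wtl_cons]
              refine Finset.sum_congr rfl (fun b _ => ?_)
              by_cases hp : r <+: List.ofFn b <;> simp [hp]
            · simp only [if_neg hu, ofFn_cons, List.cons_prefix_cons]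
              refine Finset.sum_eq_zero (fun b _ => ?_)
              simp [hu]
        _ = ∑ b : Fin m → S, if r <+: List.ofFn b then π s t * wtl π t (List.ofFn b) else 0 := by
            rw [Finset.sum_ite_eq]
            simp
        _ = π s t * wtl π t r := by
            rw [← ih m t hm, Finset.mul_sum]
            exact Finset.sum_congr rfl (fun b _ => by by_cases hp : r <+: List.ofFn b <;> simp [hp])
        _ = wtl π s (t :: r) := rfl

lemma wtl_zero_of_exit (π : S → S → ℝ≥0∞) (W : Set S)
    (hW : ∀ u ∈ W, ∀ v, π u v ≠ 0 → v ∈ W) :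
    ∀ (r : List S) (s : S), s ∈ W → (∃ x ∈ r, x ∉ W) → wtl π s r = 0 := by
  intro r
  induction r with
  | nil => intro s _ h; simp at h
  | cons t r ih =>
    intro s hs h
    by_cases h0 : π s t = 0
    · simp [h0]
    · have ht : t ∈ W := hW s hs t h0
      obtain ⟨x, hx, hxW⟩ := h
      rcases List.mem_cons.1 hx with rfl | hx'
      · exact absurd ht hxW
      · simp [ih t ht ⟨x, hx', hxW⟩]

lemma SumA_eq (π : S → S → ℝ≥0∞) (Tset : Set S) :
    ∀ (a m k : ℕ), k = a + m → ∀ s : S,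
      SumA π Tset a m s = ∑ b : Fin k → S,
        if (∀ i : Fin k, a ≤ i.val → b i ∉ Tset) then wtl π s (List.ofFn b) else 0 := by
  classical
  intro a
  induction a with
  | zero =>
    intro m
    induction m with
    | zero =>
      intro k hk s
      have hk0 : k = 0 := by omega
      subst hk0
      rw [Fintype.sum_unique]
      simp [SumA, List.ofFn_zero]
    | succ m ihm =>
      intro k hk s
      have hk2 : k = (0 + m) + 1 := by omega
      subst hk2
      rw [SumA_avoid_succ]
      rw [sum_fn_succ]
      refine Finset.sum_congr rfl (fun t _ => ?_)
      by_cases ht : t ∈ Tset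
      · rw [if_pos ht]
        refine (Finset.sum_eq_zero fun b _ => if_neg fun hcond => ?_).symm
        exact (by simpa using hcond 0 (by simp) : t ∉ Tset) ht
      · rw [if_neg ht, ihm (0 + m) rfl t, Finset.mul_sum]
        refine Finset.sum_congr rfl (fun b _ => ?_)
        have hcond : (∀ i : Fin ((0+m)+1), 0 ≤ i.val → (Fin.cons t b : Fin ((0+m)+1) → S) i ∉ Tset)
            ↔ (t ∉ Tset ∧ ∀ i : Fin (0+m), 0 ≤ i.val → b i ∉ Tset) := by
          rw [Fin.forall_fin_succ]
          simp
        rw [ofFn_cons]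
        by_cases hC : ∀ i : Fin (0+m), 0 ≤ i.val → b i ∉ Tset
        · rw [if_pos hC, if_pos (hcond.2 ⟨ht, hC⟩), wtl_cons]
        · rw [if_neg hC, if_neg (fun h => hC (hcond.1 h).2), mul_zero]
  | succ a iha =>
    intro m k hk s
    have hk2 : k = (a + m) + 1 := by omega
    subst hk2
    rw [SumA_free_succ, sum_fn_succ]
    refine Finset.sum_congr rfl (fun t _ => ?_)
    rw [iha m (a + m) rfl t, Finset.mul_sum]
    refine Finset.sum_congr rfl (fun b _ => ?_)
    have hcond : (∀ i : Fin ((a+m)+1), a+1 ≤ i.val → (Fin.cons t b : Fin ((a+m)+1) → S) i ∉ Tset)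
        ↔ (∀ i : Fin (a+m), a ≤ i.val → b i ∉ Tset) := by
      rw [Fin.forall_fin_succ]
      simp [Nat.succ_le_succ_iff]
    rw [ofFn_cons]
    by_cases hC : ∀ i : Fin (a+m), a ≤ i.val → b i ∉ Tset
    · rw [if_pos hC, if_pos (hcond.2 hC), wtl_cons]
    · rw [if_neg hC, if_neg (fun h => hC (hcond.1 h)), mul_zero]

lemma SumA_zero_eq (π : S → S → ℝ≥0∞) (Tset : Set S) (m : ℕ) (s : S) :
    SumA π Tset 0 m s
      = ∑ b : Fin m → S, if (∀ i, b i ∉ Tset) then wtl π s (List.ofFn b) else 0 := by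
  classical
  rw [SumA_eq π Tset 0 m m (by omega) s]
  exact Finset.sum_congr rfl fun b _ => by simp

lemma SumA_avoid_le (π : S → S → ℝ≥0∞) (hπ : ∀ s, ∑ t, π s t = 1) (Tset : Set S)
    (m : ℕ) (s : S) (r : List S) (hne : r ≠ [])
    (hlen : r.length ≤ m) (hlast : r.getLast hne ∈ Tset) :
    SumA π Tset 0 m s + wtl π s r ≤ 1 := by
  classical
  rw [SumA_zero_eq, ← wtl_prefix π hπ r m s hlen, ← Finset.sum_add_distrib,
    ← wtl_total π hπ m s]
  refine Finset.sum_le_sum fun b _ => ?_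
  by_cases hA : ∀ i : Fin m, b i ∉ Tset
  · by_cases hP : r <+: List.ofFn b
    · exfalso
      have hl : r.length - 1 < r.length := by
        have := List.length_pos_iff.2 hne
        omega
      have hlt : r.length - 1 < m := by omega
      have h2 := hP.getElem hl
      rw [List.getElem_ofFn] at h2
      refine hA ⟨r.length - 1, by simpa using hlt⟩ ?_
      have h3 : r.getLast hne = r[r.length - 1]'hl := List.getLast_eq_getElem hne
      rw [h3, h2] at hlast
      convert hlast using 2
    · rw [if_neg hP, add_zero]
      split <;> simp
  · rw [if_neg hA, zero_add]
    split <;> simp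

lemma SumA_le_one (π : S → S → ℝ≥0∞) (Tset : Set S) (hπ : ∀ s, ∑ t, π s t = 1) :
    ∀ a m (s : S), SumA π Tset a m s ≤ 1 := by
  intro a
  induction a with
  | zero =>
    intro m
    induction m with
    | zero => intro s; simp [SumA]
    | succ m ihm =>
      intro s
      rw [SumA_avoid_succ]
      refine le_trans (Finset.sum_le_sum fun t _ => ?_) (le_of_eq (hπ s))
      split
      · simp
      · calc π s t * SumA π Tset 0 m t ≤ π s t * 1 := mul_le_mul_right (ihm t) _
          _ = π s t := mul_one _
  | succ a iha =>
    intro m s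
    rw [SumA_free_succ]
    refine le_trans (Finset.sum_le_sum fun t _ => ?_) (le_of_eq (hπ s))
    calc π s t * SumA π Tset a m t ≤ π s t * 1 := mul_le_mul_right (iha m t) _
      _ = π s t := mul_one _

lemma SumA_comp (π : S → S → ℝ≥0∞) (Tset : Set S) (W : Set S)
    (hπ : ∀ s, ∑ t, π s t = 1)
    (hW : ∀ u ∈ W, ∀ v, π u v ≠ 0 → v ∈ W) (m : ℕ) (B : ℝ≥0∞)
    (hB : ∀ u ∈ W, SumA π Tset 0 m u ≤ B) :
    ∀ (a : ℕ) (s : S), s ∈ W → SumA π Tset 0 (a + m) s ≤ B * SumA π Tset 0 a s := by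
  intro a
  induction a with
  | zero =>
    intro s hs
    rw [Nat.zero_add]
    simpa [SumA] using hB s hs
  | succ a ih =>
    intro s hs
    have h1 : a + 1 + m = (a + m) + 1 := by omega
    rw [h1]
    rw [SumA_avoid_succ, SumA_avoid_succ, Finset.mul_sum]
    refine Finset.sum_le_sum fun t _ => ?_
    by_cases ht : t ∈ Tset
    · simp [ht]
    · rw [if_neg ht, if_neg ht]
      by_cases h0 : π s t = 0
      · simp [h0]
      · have htW := hW s hs t h0
        calc π s t * SumA π Tset 0 (a+m) t ≤ π s t * (B * SumA π Tset 0 a t) :=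
              mul_le_mul_right (ih t htW) _
          _ = B * (π s t * SumA π Tset 0 a t) := by ring

lemma SumA_pow (π : S → S → ℝ≥0∞) (Tset : Set S) (W : Set S)
    (hπ : ∀ s, ∑ t, π s t = 1)
    (hW : ∀ u ∈ W, ∀ v, π u v ≠ 0 → v ∈ W) (m0 : ℕ) (q : ℝ≥0∞)
    (hq : ∀ u ∈ W, SumA π Tset 0 m0 u ≤ q) :
    ∀ (k : ℕ) (u : S), u ∈ W → SumA π Tset 0 (k * m0) u ≤ q ^ k := by
  intro k
  induction k with
  | zero =>
    intro u hu
    rw [Nat.zero_mul]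
    simp [SumA]
  | succ k ih =>
    intro u hu
    have h1 : (k+1) * m0 = k * m0 + m0 := by ring
    rw [h1]
    calc SumA π Tset 0 (k * m0 + m0) u ≤ q * SumA π Tset 0 (k * m0) u :=
          SumA_comp π Tset W hπ hW m0 q hq (k * m0) u hu
      _ ≤ q * q ^ k := mul_le_mul_right (ih u hu) q
      _ = q ^ (k+1) := by rw [pow_succ]; ring

lemma SumA_free (π : S → S → ℝ≥0∞) (Tset : Set S) (W : Set S)
    (hπ : ∀ s, ∑ t, π s t = 1)
    (hW : ∀ u ∈ W, ∀ v, π u v ≠ 0 → v ∈ W) (m : ℕ) (B : ℝ≥0∞)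
    (hB : ∀ u ∈ W, SumA π Tset 0 m u ≤ B) :
    ∀ (a : ℕ) (s : S), s ∈ W → SumA π Tset a m s ≤ B := by
  intro a
  induction a with
  | zero => exact fun s hs => hB s hs
  | succ a ih =>
    intro s hs
    rw [SumA_free_succ]
    have : ∑ t, π s t * B ≤ B := by
      rw [← Finset.sum_mul, hπ s, one_mul]
    refine le_trans (Finset.sum_le_sum fun t _ => ?_) this
    by_cases h0 : π s t = 0
    · simp [h0]
    · exact mul_le_mul_right (ih t (hW s hs t h0)) _

end Aux

section Aux2
open MeasureTheory
open scoped Classical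
variable {S : Type*} [Fintype S] [DecidableEq S]

noncomputable def pureσ (f : S → S) : List S → S → S → ℝ≥0∞ :=
  fun _ s t => if t = f s then 1 else 0

noncomputable def purePi (G : MDP S) (f : S → S) : S → S → ℝ≥0∞ :=
  fun u v => if G.isP1 u then (if v = f u then 1 else 0) else G.δ u v

lemma purePi_sum (G : MDP S) (f : S → S) : ∀ u, ∑ v, purePi G f u v = 1 := by
  intro u
  unfold purePi
  cases h : G.isP1 u
  · simp only [h, Bool.false_eq_true, if_false]
    exact G.δ_sum u h
  · simp [h, Finset.sum_ite_eq']

lemma purePi_supp (G : MDP S) (f : S → S) (hfE : ∀ u, f u ∈ G.E u) (u v : S)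
    (h : purePi G f u v ≠ 0) : v ∈ G.E u := by
  unfold purePi at h
  cases hb : G.isP1 u
  · rw [hb] at h
    simp only [Bool.false_eq_true, if_false] at h
    exact (G.δ_support u v hb).1 h
  · rw [hb] at h
    simp only [if_true] at h
    by_cases hv : v = f u
    · exact hv ▸ hfE u
    · simp [hv] at h

lemma step_pure (G : MDP S) (f : S → S) (hist : List S) (s t : S) :
    G.step (pureσ f) hist s t = purePi G f s t := rfl

lemma pathProb_pure (G : MDP S) (f : S → S) :
    ∀ (l hist : List S) (s : S),
      G.pathProb (pureσ f) hist (s :: l) = wtl (purePi G f) s l := by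
  intro l
  induction l with
  | nil => intro hist s; rfl
  | cons t r ih =>
    intro hist s
    show G.step (pureσ f) hist s t * G.pathProb (pureσ f) (hist ++ [s]) (t :: r) = _
    rw [ih (hist ++ [s]) t, step_pure]
    rfl

lemma cylWeight_pure (G : MDP S) (f : S → S) (s t : S) (r : List S) :
    G.cylWeight (pureσ f) s (t :: r) = if t = s then wtl (purePi G f) t r else 0 := by
  show (if t = s then G.pathProb (pureσ f) [] (t :: r) else 0) = _
  rw [pathProb_pure]

lemma cylWeight_nil (G : MDP S) (σ : List S → S → S → ℝ≥0∞) (s : S) :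
    G.cylWeight σ s [] = 1 := rfl

lemma Cyl_nil : Cyl ([] : List S) = Set.univ := by
  ext ω
  exact ⟨fun _ => trivial, fun _ i => i.elim0⟩

lemma Pr_mono (G : MDP S) (σ : List S → S → S → ℝ≥0∞) (s : S) {Φ Ψ : Set (ℕ → S)}
    (h : Φ ⊆ Ψ) : G.Pr σ s Φ ≤ G.Pr σ s Ψ := by
  unfold MDP.Pr
  exact OuterMeasure.mono _ h

lemma Pr_iUnion_le (G : MDP S) (σ : List S → S → S → ℝ≥0∞) (s : S) {ι : Type*} [Countable ι]
    (A : ι → Set (ℕ → S)) : G.Pr σ s (⋃ i, A i) ≤ ∑' i, G.Pr σ s (A i) := by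
  unfold MDP.Pr
  exact measure_iUnion_le A

lemma Pr_union_le (G : MDP S) (σ : List S → S → S → ℝ≥0∞) (s : S) (Φ Ψ : Set (ℕ → S)) :
    G.Pr σ s (Φ ∪ Ψ) ≤ G.Pr σ s Φ + G.Pr σ s Ψ := by
  unfold MDP.Pr
  exact measure_union_le Φ Ψ

lemma Pr_le_cylWeight (G : MDP S) (σ : List S → S → S → ℝ≥0∞) (s : S) (l : List S) :
    G.Pr σ s (Cyl l) ≤ G.cylWeight σ s l := by
  unfold MDP.Pr
  refine le_trans (OuterMeasure.ofFunction_le _) ?_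
  split_ifs with h
  · exact zero_le
  · exact iInf_le_of_le l (iInf_le _ rfl)

lemma Pr_le_one (G : MDP S) (σ : List S → S → S → ℝ≥0∞) (s : S) (Φ : Set (ℕ → S)) :
    G.Pr σ s Φ ≤ 1 := by
  refine le_trans (Pr_mono G σ s (Set.subset_univ Φ)) ?_
  rw [← Cyl_nil]
  exact le_trans (Pr_le_cylWeight G σ s []) (le_of_eq (cylWeight_nil G σ s))

/-- Compactness: any countable cover of the full play space by cylinders has
total weight at least 1. -/
lemma cyl_prefix_sum_le (G : MDP S) (f : S → S) (s : S) (M : ℕ) (r0 : List S)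
    (hlen : r0.length ≤ M + 1) :
    ∑ b : Fin M → S, (if r0 <+: s :: List.ofFn b then wtl (purePi G f) s (List.ofFn b) else 0)
      ≤ G.cylWeight (pureσ f) s r0 := by
  have hπ := purePi_sum G f
  cases r0 with
  | nil =>
    simp only [List.nil_prefix, if_true]
    rw [wtl_total _ hπ M s]
    exact le_of_eq (cylWeight_nil G _ s).symm
  | cons t r =>
    rw [cylWeight_pure]
    by_cases hts : t = s
    · subst hts
      rw [if_pos rfl]
      have hrlen : r.length ≤ M := by simpa using hlen
      rw [← wtl_prefix _ hπ r M t hrlen]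
      refine le_of_eq (Finset.sum_congr rfl fun b _ => ?_)
      simp [List.cons_prefix_cons]
    · rw [if_neg hts]
      refine le_of_eq (Finset.sum_eq_zero fun b _ => ?_)
      simp [List.cons_prefix_cons, hts]

lemma cover_tsum (G : MDP S) (f : S → S) (s : S)
    (l : ℕ → List S) (g : ℕ → Prop) [DecidablePred g]
    (hcov : Set.univ ⊆ ⋃ n, (if g n then Cyl (l n) else ∅)) :
    1 ≤ ∑' n, (if g n then G.cylWeight (pureσ f) s (l n) else 0) := by
  have hπ := purePi_sum G f
  set π := purePi G f with hπdef
  letI : TopologicalSpace S := ⊥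
  haveI : DiscreteTopology S := ⟨rfl⟩
  have hopen : ∀ n, IsOpen (if g n then Cyl (l n) else ∅) := by
    intro n
    split_ifs
    · have hC : Cyl (l n)
          = ⋂ i : Fin (l n).length, (fun ω : ℕ → S => ω i.val) ⁻¹' {(l n).get i} := by
        ext ω
        simp [Cyl, Set.mem_iInter]
      rw [hC]
      exact isOpen_iInter_of_finite fun i =>
        (continuous_apply _).isOpen_preimage _ (isOpen_discrete _)
    · exact isOpen_empty
  obtain ⟨F, hF⟩ := isCompact_univ.elim_finite_subcover _ hopen hcov
  set M := F.sup (fun n => (l n).length) with hMdef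
  have key : ∑ b : Fin M → S, wtl π s (List.ofFn b)
      ≤ ∑ n ∈ F, (if g n then G.cylWeight (pureσ f) s (l n) else 0) := by
    have hwit : ∀ b : Fin M → S, ∃ n ∈ F, g n ∧ l n <+: s :: List.ofFn b := by
      intro b
      have hmem := hF (Set.mem_univ (fun i => (s :: List.ofFn b).getD i s))
      rw [Set.mem_iUnion₂] at hmem
      obtain ⟨n, hnF, hmem⟩ := hmem
      by_cases hg : g n
      swap
      · rw [if_neg hg] at hmem
        exact absurd hmem (Set.notMem_empty _)
      rw [if_pos hg] at hmem
      refine ⟨n, hnF, hg, ?_⟩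
      have hlen : (l n).length ≤ M := Finset.le_sup (f := fun k => (l k).length) hnF
      have heq : l n = (s :: List.ofFn b).take (l n).length := by
        apply List.ext_getElem
        · simp [List.length_take]
          omega
        · intro i h1 h2
          rw [List.getElem_take]
          have hmem' : ∀ i : Fin (l n).length,
              (fun j => (s :: List.ofFn b).getD j s) i.val = (l n).get i := hmem
          have hi1 : i < (s :: List.ofFn b).length := by
            simp
            omega
          have h4 : (s :: List.ofFn b).getD i s = (l n).get ⟨i, h1⟩ := hmem' ⟨i, h1⟩
          rw [List.getD_eq_getElem _ _ hi1, List.get_eq_getElem] at h4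
          exact h4.symm
      exact heq ▸ List.take_prefix _ _
    calc ∑ b : Fin M → S, wtl π s (List.ofFn b)
        ≤ ∑ b : Fin M → S, ∑ n ∈ F,
            (if g n ∧ l n <+: s :: List.ofFn b then wtl π s (List.ofFn b) else 0) := by
          refine Finset.sum_le_sum fun b _ => ?_
          obtain ⟨n, hnF, hg, hpre⟩ := hwit b
          have heq1 : (if g n ∧ l n <+: s :: List.ofFn b then wtl π s (List.ofFn b) else 0)
              = wtl π s (List.ofFn b) := if_pos ⟨hg, hpre⟩
          exact le_trans (le_of_eq heq1.symm)
            (Finset.single_le_sum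
              (f := fun n => if g n ∧ l n <+: s :: List.ofFn b then wtl π s (List.ofFn b) else 0)
              (fun _ _ => zero_le) hnF)
      _ = ∑ n ∈ F, ∑ b : Fin M → S,
            (if g n ∧ l n <+: s :: List.ofFn b then wtl π s (List.ofFn b) else 0) :=
          Finset.sum_comm
      _ ≤ ∑ n ∈ F, (if g n then G.cylWeight (pureσ f) s (l n) else 0) := by
          refine Finset.sum_le_sum fun n hnF => ?_
          by_cases hg : g n
          swap
          · simp [hg]
          rw [if_pos hg]
          calc ∑ b : Fin M → S, (if g n ∧ l n <+: s :: List.ofFn b then wtl π s (List.ofFn b) else 0)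
              ≤ ∑ b : Fin M → S, (if l n <+: s :: List.ofFn b then wtl π s (List.ofFn b) else 0) := by
                refine Finset.sum_le_sum fun b _ => ?_
                by_cases hp : l n <+: s :: List.ofFn b
                · simp [hp, hg]
                · simp [hp]
            _ ≤ G.cylWeight (pureσ f) s (l n) :=
                cyl_prefix_sum_le G f s M (l n)
                  (le_trans (Finset.le_sup (f := fun k => (l k).length) hnF) (Nat.le_succ M))
  calc (1 : ℝ≥0∞) = ∑ b : Fin M → S, wtl π s (List.ofFn b) := (wtl_total π hπ M s).symm
    _ ≤ ∑ n ∈ F, (if g n then G.cylWeight (pureσ f) s (l n) else 0) := key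
    _ ≤ ∑' n, (if g n then G.cylWeight (pureσ f) s (l n) else 0) := ENNReal.sum_le_tsum F

lemma Pr_univ_pure (G : MDP S) (f : S → S) (s : S) :
    G.Pr (pureσ f) s Set.univ = 1 := by
  refine le_antisymm (Pr_le_one _ _ _ _) ?_
  unfold MDP.Pr
  rw [OuterMeasure.ofFunction_apply]
  refine le_iInf fun A => le_iInf fun hA => ?_
  set m : Set (ℕ → S) → ℝ≥0∞ := fun A =>
    if A = ∅ then 0 else ⨅ (l : List S) (_ : A = Cyl l), G.cylWeight (pureσ f) s l with hmdef
  show (1 : ℝ≥0∞) ≤ ∑' n, m (A n)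
  by_cases htop : ∃ n, m (A n) = ⊤
  · obtain ⟨n, hn⟩ := htop
    exact le_trans (le_top.trans_eq hn.symm) (ENNReal.le_tsum n)
  push_neg at htop
  refine ENNReal.le_of_forall_pos_le_add fun ε hε hfin => ?_
  obtain ⟨δ, hδpos, hδsum⟩ := ENNReal.exists_pos_sum_of_countable
    (ε := (ε : ℝ≥0∞)) (by exact_mod_cast hε.ne') ℕ
  have hchoice : ∀ n, ∃ lw : List S, A n ≠ ∅ →
      (A n = Cyl lw ∧ G.cylWeight (pureσ f) s lw ≤ m (A n) + δ n) := by
    intro n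
    by_cases hne : A n = ∅
    · exact ⟨[], fun h => absurd hne h⟩
    · have hlt : m (A n) < m (A n) + δ n :=
        ENNReal.lt_add_right (htop n) (by exact_mod_cast (hδpos n).ne')
      have hmAn : m (A n) = ⨅ (lw : List S) (_ : A n = Cyl lw), G.cylWeight (pureσ f) s lw := by
        rw [hmdef]
        exact if_neg hne
      have hiInf : (⨅ (lw : List S) (_ : A n = Cyl lw), G.cylWeight (pureσ f) s lw)
          < m (A n) + δ n := hmAn.symm.trans_lt hlt
      rw [iInf_lt_iff] at hiInf
      obtain ⟨lw, hlw⟩ := hiInf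
      rw [iInf_lt_iff] at hlw
      obtain ⟨hcylw, hw⟩ := hlw
      exact ⟨lw, fun _ => ⟨hcylw, hw.le⟩⟩
  choose lw hlw using hchoice
  have hcov : Set.univ ⊆ ⋃ n, (if A n ≠ ∅ then Cyl (lw n) else ∅) := by
    intro ω _
    obtain ⟨An, ⟨n, rfl⟩, hω⟩ := hA (Set.mem_univ ω)
    refine Set.mem_iUnion.2 ⟨n, ?_⟩
    have hne : A n ≠ ∅ := Set.nonempty_iff_ne_empty.1 ⟨ω, hω⟩
    rw [if_pos hne, ← (hlw n hne).1]
    exact hω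
  have hkey := cover_tsum G f s lw (fun n => A n ≠ ∅) hcov
  calc (1 : ℝ≥0∞) ≤ ∑' n, (if A n ≠ ∅ then G.cylWeight (pureσ f) s (lw n) else 0) := hkey
    _ ≤ ∑' n, (m (A n) + δ n) := by
        refine ENNReal.tsum_le_tsum fun n => ?_
        split_ifs with hne
        · exact (hlw n hne).2
        · exact zero_le
    _ = (∑' n, m (A n)) + ∑' n, (δ n : ℝ≥0∞) := ENNReal.tsum_add
    _ ≤ (∑' n, m (A n)) + ε := add_le_add_right hδsum.le _

def RIter (G : MDP S) (W Tgt : Set S) : ℕ → Set S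
  | 0 => Tgt ∩ W
  | i+1 => RIter G W Tgt i ∪ {u | u ∈ W ∧ ∃ t, t ∈ G.E u ∧ t ∈ W ∧ t ∈ RIter G W Tgt i}

lemma RIter_zero (G : MDP S) (W Tgt : Set S) : RIter G W Tgt 0 = Tgt ∩ W := rfl

lemma RIter_succ (G : MDP S) (W Tgt : Set S) (i : ℕ) :
    RIter G W Tgt (i+1) = RIter G W Tgt i
      ∪ {u | u ∈ W ∧ ∃ t, t ∈ G.E u ∧ t ∈ W ∧ t ∈ RIter G W Tgt i} := rfl

lemma RIter_mono (G : MDP S) (W Tgt : Set S) {i j : ℕ} (hij : i ≤ j) :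
    RIter G W Tgt i ⊆ RIter G W Tgt j := by
  induction j with
  | zero => rw [Nat.le_zero.1 hij]
  | succ j ihj =>
    by_cases h : i ≤ j
    · exact (ihj h).trans (by rw [RIter_succ]; exact Set.subset_union_left)
    · have hh : i = j + 1 := by omega
      rw [hh]

lemma Pr_empty (G : MDP S) (σ : List S → S → S → ℝ≥0∞) (s : S) : G.Pr σ s ∅ = 0 := by
  unfold MDP.Pr
  exact measure_empty

lemma Pr_eq_one_of_compl (G : MDP S) (f : S → S) (s : S) (Φ : Set (ℕ → S))
    (h : G.Pr (pureσ f) s Φᶜ = 0) : G.Pr (pureσ f) s Φ = 1 := by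
  refine le_antisymm (Pr_le_one _ _ _ _) ?_
  calc (1:ℝ≥0∞) = G.Pr (pureσ f) s Set.univ := (Pr_univ_pure G f s).symm
    _ ≤ G.Pr (pureσ f) s Φ + G.Pr (pureσ f) s Φᶜ := by
        rw [← Set.union_compl_self Φ]
        exact Pr_union_le _ _ _ _ _
    _ = G.Pr (pureσ f) s Φ := by rw [h, add_zero]

end Aux2


/-- If `W` is closed for random states, every player-1 state of `W` has a
successor in `W`, and every state of `W` has a path inside `W` to `T ∩ W`, then
`W` is contained in the almost-sure winning set and a single pure memoryless strategy
keeps the play in `W` forever and wins the Büchi objective with probability 1 from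
every state of `W`. -/
theorem stmt2 {S : Type*} [Fintype S] [DecidableEq S] (G : MDP S) (T W : Set S)
    (h1 : ∀ s ∈ W, G.isP1 s = false → ∀ t ∈ G.E s, t ∈ W)
    (h2 : ∀ s ∈ W, G.isP1 s = true → ∃ t ∈ G.E s, t ∈ W)
    (h3 : ∀ s ∈ W, ∃ t ∈ T ∩ W, G.ReachesIn W s t) :
    W ⊆ G.winAS (BuchiEvent T) ∧
    ∃ σ : List S → S → S → ℝ≥0∞, G.IsPureMemoryless σ ∧ G.IsStrategy σ ∧
      ∀ s ∈ W, G.Pr σ s {ω : ℕ → S | ∀ i, ω i ∈ W} = 1 ∧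
        G.Pr σ s (BuchiEvent T) = 1 := by
  classical
  have hWR : ∀ u, u ∈ W → ∃ i, u ∈ RIter G W T i := by
    intro u hu
    obtain ⟨t, htTW, hreach⟩ := h3 u hu
    have key : ∀ a : S, G.ReachesIn W a t → a ∈ W → ∃ i, a ∈ RIter G W T i := by
      intro a ha
      induction ha using Relation.ReflTransGen.head_induction_on with
      | refl => exact fun _ => ⟨0, htTW⟩
      | head hstep htail ih =>
        intro haW
        obtain ⟨i, hi⟩ := ih hstep.2
        refine ⟨i + 1, ?_⟩
        rw [RIter_succ, Set.mem_union]
        exact Or.inr ⟨haW, _, hstep.1, hstep.2, hi⟩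
    exact key u hreach hu
  obtain ⟨n, hWRn⟩ : ∃ n, ∀ u ∈ W, u ∈ RIter G W T n := by
    refine ⟨Finset.univ.sup (fun u => if h : u ∈ W then (hWR u h).choose else 0),
      fun u hu => ?_⟩
    refine RIter_mono G W T ?_ (hWR u hu).choose_spec
    have hle2 : (if h : u ∈ W then (hWR u h).choose else 0)
        ≤ Finset.univ.sup (fun u => if h : u ∈ W then (hWR u h).choose else 0) :=
      Finset.le_sup (f := fun u => if h : u ∈ W then (hWR u h).choose else 0)
        (Finset.mem_univ u)
    rwa [dif_pos hu] at hle2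
  have hf : ∀ u : S, ∃ v : S, v ∈ G.E u ∧ (u ∈ W → v ∈ W) ∧
      (∀ j, u ∈ W → G.isP1 u = true → u ∈ RIter G W T (j+1) → u ∉ RIter G W T j →
        v ∈ RIter G W T j) := by
    intro u
    by_cases huW : u ∈ W
    · by_cases hP1 : G.isP1 u = true
      · by_cases hex : ∃ j, u ∈ RIter G W T (j+1) ∧ u ∉ RIter G W T j
        · obtain ⟨j, hj1, hj2⟩ := hex
          have hj1' := hj1
          rw [RIter_succ, Set.mem_union] at hj1'
          rcases hj1' with h | h
          · exact absurd h hj2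
          · obtain ⟨-, v, hvE, hvW, hvR⟩ := h
            refine ⟨v, hvE, fun _ => hvW, fun j' _ _ hja hjb => ?_⟩
            have hjj : j' = j := by
              by_contra hne
              rcases Nat.lt_or_ge j' j with hlt | hge
              · exact hj2 (RIter_mono G W T (by omega) hja)
              · exact hjb (RIter_mono G W T (by omega) hj1)
            exact hjj ▸ hvR
        · push_neg at hex
          obtain ⟨v, hvE, hvW⟩ := h2 u huW hP1
          exact ⟨v, hvE, fun _ => hvW, fun j _ _ hja hjb => absurd (hex j hja) hjb⟩
      · have hP1' : G.isP1 u = false := by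
          cases hb : G.isP1 u
          · rfl
          · exact absurd hb hP1
        obtain ⟨v, hvE⟩ := G.E_nonempty u
        exact ⟨v, hvE, fun _ => h1 u huW hP1' v hvE, fun j _ hc => absurd hc hP1⟩
    · obtain ⟨v, hvE⟩ := G.E_nonempty u
      exact ⟨v, hvE, fun h => absurd h huW, fun j h => absurd h huW⟩
  choose f hfE hfW hfR using hf
  have hsum1 : ∀ u, ∑ v, purePi G f u v = 1 := purePi_sum G f
  have hπW : ∀ u ∈ W, ∀ v, purePi G f u v ≠ 0 → v ∈ W := by
    intro u hu v hv
    unfold purePi at hv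
    cases hb : G.isP1 u
    · rw [hb] at hv
      simp only [Bool.false_eq_true, if_false] at hv
      exact h1 u hu hb v ((G.δ_support u v hb).1 hv)
    · rw [hb] at hv
      simp only [if_true] at hv
      by_cases hvf : v = f u
      · exact hvf ▸ hfW u hu
      · simp [hvf] at hv
  have hσstrat : G.IsStrategy (pureσ f) := by
    constructor
    · intro w u _
      show (∑ t, if t = f u then (1:ℝ≥0∞) else 0) = 1
      simp [Finset.sum_ite_eq']
    · intro w u t _ h
      by_cases ht : t = f u
      · exact ht ▸ hfE u
      · exact absurd (show pureσ f w u t = 0 from if_neg ht) h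
  set c : ℝ≥0∞ :=
    (Finset.univ.inf fun p : S × S =>
      if purePi G f p.1 p.2 = 0 then 1 else purePi G f p.1 p.2) ⊓ 1 with hcdef
  have hc1 : c ≤ 1 := inf_le_right
  have hcle : ∀ u v, purePi G f u v ≠ 0 → c ≤ purePi G f u v := by
    intro u v h
    refine le_trans inf_le_left (le_trans (Finset.inf_le (Finset.mem_univ (u, v))) ?_)
    exact le_of_eq (if_neg h)
  have hc0 : c ≠ 0 := by
    have h9 : (0:ℝ≥0∞) < c := by
      rw [hcdef]
      refine lt_inf_iff.2 ⟨?_, zero_lt_one⟩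
      refine (Finset.lt_inf_iff (by simp)).2 fun p _ => ?_
      split_ifs with hp
      · exact zero_lt_one
      · exact pos_iff_ne_zero.2 hp
    exact h9.ne'
  have hGP : ∀ u ∈ W, ∃ r : List S, ∃ hne : r ≠ [],
      r.length ≤ n + 1 ∧ c ^ (n+1) ≤ wtl (purePi G f) u r ∧ r.getLast hne ∈ T := by
    have hDESC : ∀ j, ∀ u, u ∈ W → u ∈ RIter G W T j → ∃ r : List S,
        r.length ≤ j ∧ c ^ r.length ≤ wtl (purePi G f) u r ∧
        (u :: r).getLast (List.cons_ne_nil u r) ∈ T := by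
      intro j
      induction j with
      | zero =>
        intro u huW huR
        rw [RIter_zero] at huR
        exact ⟨[], by simp, by simp, by simpa using huR.1⟩
      | succ j ihj =>
        intro u huW huR
        by_cases hRj : u ∈ RIter G W T j
        · obtain ⟨r, ha, hb, hcc⟩ := ihj u huW hRj
          exact ⟨r, ha.trans (Nat.le_succ j), hb, hcc⟩
        · rw [RIter_succ, Set.mem_union] at huR
          rcases huR with h | h
          · exact absurd h hRj
          obtain ⟨-, v0, hv0E, hv0W, hv0R⟩ := h
          by_cases hP1 : G.isP1 u = true
          · have hfu := hfR u j huW hP1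
              (by rw [RIter_succ, Set.mem_union]; exact Or.inr ⟨huW, v0, hv0E, hv0W, hv0R⟩)
              hRj
            obtain ⟨r, hrl, hrw, hrT⟩ := ihj (f u) (hfW u huW) hfu
            have hπfu : purePi G f u (f u) = 1 := by
              unfold purePi
              rw [hP1]
              simp
            refine ⟨f u :: r, by simpa using Nat.succ_le_succ hrl, ?_, ?_⟩
            · rw [wtl_cons, hπfu, one_mul]
              exact le_trans (pow_le_pow_of_le_one (zero_le) hc1 (by simp)) hrw
            · rw [show (u :: f u :: r).getLast (List.cons_ne_nil u (f u :: r))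
                  = (f u :: r).getLast (List.cons_ne_nil (f u) r) from
                  List.getLast_cons (List.cons_ne_nil (f u) r)]
              exact hrT
          · have hP1' : G.isP1 u = false := by
              cases hb : G.isP1 u
              · rfl
              · exact absurd hb hP1
            have hπv0 : purePi G f u v0 ≠ 0 := by
              unfold purePi
              rw [hP1']
              simpa using (G.δ_support u v0 hP1').2 hv0E
            obtain ⟨r, hrl, hrw, hrT⟩ := ihj v0 hv0W hv0R
            refine ⟨v0 :: r, by simpa using Nat.succ_le_succ hrl, ?_, ?_⟩
            · rw [wtl_cons]
              calc c ^ (v0 :: r).length = c * c ^ r.length := by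
                    rw [List.length_cons, pow_succ, mul_comm]
                _ ≤ purePi G f u v0 * wtl (purePi G f) v0 r :=
                    mul_le_mul' (hcle u v0 hπv0) hrw
            · rw [show (u :: v0 :: r).getLast (List.cons_ne_nil u (v0 :: r))
                  = (v0 :: r).getLast (List.cons_ne_nil v0 r) from
                  List.getLast_cons (List.cons_ne_nil v0 r)]
              exact hrT
    intro u huW
    have hstep : ∃ v, purePi G f u v ≠ 0 ∧ v ∈ W := by
      by_cases hP1 : G.isP1 u = true
      · refine ⟨f u, ?_, hfW u huW⟩
        unfold purePi
        rw [hP1]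
        simp
      · have hP1' : G.isP1 u = false := by
          cases hb : G.isP1 u
          · rfl
          · exact absurd hb hP1
        obtain ⟨v, hvE⟩ := G.E_nonempty u
        refine ⟨v, ?_, h1 u huW hP1' v hvE⟩
        unfold purePi
        rw [hP1']
        simpa using (G.δ_support u v hP1').2 hvE
    obtain ⟨v, hπv, hvW⟩ := hstep
    obtain ⟨r, hrl, hrw, hrT⟩ := hDESC n v hvW (hWRn v hvW)
    refine ⟨v :: r, List.cons_ne_nil v r, by simpa using Nat.succ_le_succ hrl, ?_, ?_⟩
    · rw [wtl_cons]
      calc c ^ (n+1) ≤ c ^ (r.length + 1) :=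
            pow_le_pow_of_le_one (zero_le) hc1 (by omega)
        _ = c * c ^ r.length := by rw [pow_succ, mul_comm]
        _ ≤ purePi G f u v * wtl (purePi G f) v r := mul_le_mul' (hcle u v hπv) hrw
    · exact hrT
  have hcpow_ne_top : c ^ (n+1) ≠ ⊤ :=
    ne_top_of_le_ne_top ENNReal.one_ne_top (pow_le_one' hc1 _)
  have hq : ∀ u ∈ W, SumA (purePi G f) T 0 (n+1) u ≤ 1 - c ^ (n+1) := by
    intro u huW
    obtain ⟨r, hne, hrl, hrw, hrT⟩ := hGP u huW
    have h6 := SumA_avoid_le (purePi G f) hsum1 T (n+1) u r hne hrl hrT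
    have h7 : SumA (purePi G f) T 0 (n+1) u + c ^ (n+1) ≤ 1 :=
      le_trans (add_le_add_right hrw _) h6
    exact ENNReal.le_sub_of_add_le_right hcpow_ne_top h7
  have hqlt : (1:ℝ≥0∞) - c ^ (n+1) < 1 :=
    ENNReal.sub_lt_self ENNReal.one_ne_top one_ne_zero (pow_ne_zero _ hc0)
  have hPrW : ∀ s, s ∈ W → G.Pr (pureσ f) s {ω : ℕ → S | ∀ i, ω i ∈ W} = 1 := by
    intro s hsW
    refine Pr_eq_one_of_compl G f s _ ?_
    refine le_antisymm ?_ (zero_le)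
    have hcover : {ω : ℕ → S | ∀ i, ω i ∈ W}ᶜ ⊆
        ⋃ r : List S, (if G.cylWeight (pureσ f) s r = 0 then Cyl r else ∅) := by
      intro ω hω
      simp only [Set.mem_compl_iff, Set.mem_setOf_eq, not_forall] at hω
      obtain ⟨i, hi⟩ := hω
      refine Set.mem_iUnion.2 ⟨ω 0 :: List.ofFn (fun j : Fin i => ω (j.val + 1)), ?_⟩
      have hmem : ω ∈ Cyl (ω 0 :: List.ofFn (fun j : Fin i => ω (j.val + 1))) := by
        intro jj
        induction jj using Fin.cases with
        | zero => rfl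
        | succ j => simp [List.get_ofFn]
      have hw0 : G.cylWeight (pureσ f) s
          (ω 0 :: List.ofFn (fun j : Fin i => ω (j.val + 1))) = 0 := by
        rw [cylWeight_pure]
        by_cases h0 : ω 0 = s
        case neg => rw [if_neg h0]
        case pos =>
          rw [if_pos h0]
          have hω0W : ω 0 ∈ W := by rw [h0]; exact hsW
          have hi0 : i ≠ 0 := by
            rintro rfl
            exact hi hω0W
          refine wtl_zero_of_exit (purePi G f) W hπW _ (ω 0) hω0W ⟨ω i, ?_, hi⟩
          rw [List.mem_ofFn]
          refine ⟨⟨i - 1, by omega⟩, ?_⟩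
          show ω ((i - 1) + 1) = ω i
          congr 1
          omega
      rw [if_pos hw0]
      exact hmem
    refine le_trans (Pr_mono G (pureσ f) s hcover) ?_
    refine le_trans (Pr_iUnion_le G (pureσ f) s _) ?_
    have hzero : ∀ r : List S,
        G.Pr (pureσ f) s (if G.cylWeight (pureσ f) s r = 0 then Cyl r else ∅) = 0 := by
      intro r
      split_ifs with h0
      · exact le_antisymm (le_trans (Pr_le_cylWeight G (pureσ f) s r) h0.le) (zero_le)
      · exact Pr_empty G (pureσ f) s
    simp [hzero]
  have hPrB : ∀ s, s ∈ W → G.Pr (pureσ f) s (BuchiEvent T) = 1 := by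
    intro s hsW
    have hDzero : ∀ N : ℕ,
        G.Pr (pureσ f) s {ω : ℕ → S | ∀ i, N ≤ i → ω i ∉ T} = 0 := by
      intro N
      refine le_antisymm ?_ (zero_le)
      have hbound : ∀ k : ℕ, G.Pr (pureσ f) s {ω : ℕ → S | ∀ i, N ≤ i → ω i ∉ T}
          ≤ (1 - c ^ (n+1)) ^ k := by
        intro k
        have hcov : {ω : ℕ → S | ∀ i, N ≤ i → ω i ∉ T} ⊆
            (⋃ t : {t : S // t ≠ s}, Cyl [t.val])
            ∪ ⋃ b : Fin (N + k * (n+1)) → S,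
                (if (∀ i : Fin (N + k * (n+1)), N ≤ i.val → b i ∉ T)
                 then Cyl (s :: List.ofFn b) else ∅) := by
          intro ω hω
          by_cases h0 : ω 0 = s
          · refine Or.inr (Set.mem_iUnion.2
              ⟨fun i : Fin (N + k * (n+1)) => ω (i.val + 1), ?_⟩)
            have hcond : ∀ i : Fin (N + k * (n+1)), N ≤ i.val →
                (fun i : Fin (N + k * (n+1)) => ω (i.val + 1)) i ∉ T :=
              fun i hi => hω (i.val + 1) (by omega)
            rw [if_pos hcond]
            intro jj
            induction jj using Fin.cases with
            | zero => exact h0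
            | succ j => simp [List.get_ofFn]
          · refine Or.inl (Set.mem_iUnion.2 ⟨⟨ω 0, h0⟩, ?_⟩)
            intro jj
            induction jj using Fin.cases with
            | zero => rfl
            | succ j => exact j.elim0
        refine le_trans (Pr_mono G (pureσ f) s hcov) ?_
        refine le_trans (Pr_union_le G (pureσ f) s _ _) ?_
        have hA : G.Pr (pureσ f) s (⋃ t : {t : S // t ≠ s}, Cyl [t.val]) = 0 := by
          refine le_antisymm (le_trans (Pr_iUnion_le G (pureσ f) s _) ?_) (zero_le)
          have h10 : ∀ t : {t : S // t ≠ s}, G.Pr (pureσ f) s (Cyl [t.val]) = 0 := by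
            intro t
            refine le_antisymm (le_trans (Pr_le_cylWeight G (pureσ f) s _) ?_) (zero_le)
            rw [cylWeight_pure, if_neg t.prop]
          simp [h10]
        have hB : G.Pr (pureσ f) s (⋃ b : Fin (N + k * (n+1)) → S,
            (if (∀ i : Fin (N + k * (n+1)), N ≤ i.val → b i ∉ T)
             then Cyl (s :: List.ofFn b) else ∅)) ≤ (1 - c ^ (n+1)) ^ k := by
          refine le_trans (Pr_iUnion_le G (pureσ f) s _) ?_
          rw [tsum_fintype]
          have heach : ∀ b : Fin (N + k * (n+1)) → S,
              G.Pr (pureσ f) s (if (∀ i : Fin (N + k * (n+1)), N ≤ i.val → b i ∉ T)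
                then Cyl (s :: List.ofFn b) else ∅)
              ≤ (if (∀ i : Fin (N + k * (n+1)), N ≤ i.val → b i ∉ T)
                then wtl (purePi G f) s (List.ofFn b) else 0) := by
            intro b
            split_ifs with hb
            · refine le_trans (Pr_le_cylWeight G (pureσ f) s _) ?_
              rw [cylWeight_pure, if_pos rfl]
            · exact le_of_eq (Pr_empty G (pureσ f) s)
          refine le_trans (Finset.sum_le_sum fun b _ => heach b) ?_
          rw [← SumA_eq (purePi G f) T N (k * (n+1)) (N + k * (n+1)) rfl s]
          exact SumA_free (purePi G f) T W hsum1 hπW (k * (n+1)) ((1 - c ^ (n+1)) ^ k)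
            (fun u hu => SumA_pow (purePi G f) T W hsum1 hπW (n+1) (1 - c ^ (n+1)) hq k u hu)
            N s hsW
        rw [hA, zero_add]
        exact hB
      exact ge_of_tendsto' (ENNReal.tendsto_pow_atTop_nhds_zero_of_lt_one hqlt) hbound
    refine Pr_eq_one_of_compl G f s _ ?_
    have hsubset : (BuchiEvent T)ᶜ ⊆ ⋃ N : ℕ, {ω : ℕ → S | ∀ i, N ≤ i → ω i ∉ T} := by
      intro ω hω
      have hω' : ∀ t ∈ T, ¬ {i : ℕ | ω i = t}.Infinite := fun t ht hinf => hω ⟨t, ht, hinf⟩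
      have hfin : {i : ℕ | ω i ∈ T}.Finite := by
        have hsub : {i : ℕ | ω i ∈ T} ⊆ ⋃ t ∈ T, {i : ℕ | ω i = t} :=
          fun i hi => Set.mem_biUnion hi rfl
        exact Set.Finite.subset (Set.Finite.biUnion (Set.toFinite T)
          (fun t ht => Set.not_infinite.1 (hω' t ht))) hsub
      obtain ⟨N, hN⟩ := hfin.bddAbove
      refine Set.mem_iUnion.2 ⟨N + 1, fun i hi hiT => ?_⟩
      have := hN (show i ∈ {i : ℕ | ω i ∈ T} from hiT)
      omega
    refine le_antisymm (le_trans (Pr_mono G (pureσ f) s hsubset)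
      (le_trans (Pr_iUnion_le G (pureσ f) s _) ?_)) (zero_le)
    simp [hDzero]
  constructor
  · intro s hs
    exact ⟨pureσ f, hσstrat, hPrB s hs⟩
  · exact ⟨pureσ f, ⟨f, hfE, rfl⟩, hσstrat, fun s hs => ⟨hPrW s hs, hPrB s hs⟩⟩
end

section
/- Let G be an MDP with target set T, and let C and Z be subsets of S such that C is disjoint from T, Z is disjoint from Win_as(Buchi(T)), and for every state s in C, E(s) is contained in the union of C and Z. Then C is disjoint from Win_as(Buchi(T)): for every state s in C and every player-1 strategy sigma, Pr_s^sigma(Buchi(T)) < 1. -/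
open scoped ENNReal
open MeasureTheory

variable {S : Type*} [Fintype S] [DecidableEq S]

namespace MDP

section Aux

variable {S : Type*} [Fintype S] [DecidableEq S] (G : MDP S) (σ : List S → S → S → ℝ≥0∞)

lemma step_sum (hσ : G.IsStrategy σ) (hist : List S) (s : S) :
    ∑ t, G.step σ hist s t = 1 := by
  cases h : G.isP1 s with
  | true => simp only [step, h]; simpa using hσ.1 hist s h
  | false => simp only [step, h]; simpa using G.δ_sum s h

lemma step_le_one (hσ : G.IsStrategy σ) (hist : List S) (s t : S) :
    G.step σ hist s t ≤ 1 := by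
  rw [← step_sum G σ hσ hist s]
  exact Finset.single_le_sum (fun _ _ => zero_le) (Finset.mem_univ t)

lemma step_eq_zero (hσ : G.IsStrategy σ) (hist : List S) {s t : S} (h : t ∉ G.E s) :
    G.step σ hist s t = 0 := by
  cases hp : G.isP1 s with
  | true =>
    simp only [step, hp, if_true]
    by_contra hne
    exact h (hσ.2 hist s t hp hne)
  | false =>
    simp only [step, hp]
    by_contra hne
    exact h ((G.δ_support s t hp).1 (by simpa using hne))

lemma pathProb_le_one (hσ : G.IsStrategy σ) :
    ∀ (l hist : List S), G.pathProb σ hist l ≤ 1 := by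
  intro l
  induction l with
  | nil => intro hist; simp [pathProb]
  | cons a rest ih =>
    intro hist
    cases rest with
    | nil => simp [pathProb]
    | cons b t =>
      simp only [pathProb]
      exact mul_le_one' (step_le_one G σ hσ hist a b) (ih (hist ++ [a]))

lemma pathProb_append (pre : List S) :
    ∀ (hist : List S) (z : S) (rest : List S),
      G.pathProb σ hist (pre ++ z :: rest)
        = G.pathProb σ hist (pre ++ [z]) * G.pathProb σ (hist ++ pre) (z :: rest) := by
  induction pre with
  | nil => intro hist z rest; simp [pathProb]
  | cons a pre' ih =>
    intro hist z rest
    cases pre' with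
    | nil =>
      simp only [List.cons_append, List.nil_append, pathProb, mul_assoc]
      simp [pathProb]
    | cons b t =>
      simp only [List.cons_append, pathProb, List.append_eq]
      rw [show b :: (t ++ z :: rest) = (b::t) ++ (z::rest) from rfl,
        show b :: (t ++ [z]) = (b::t) ++ [z] from rfl, ih (hist ++ [a]) z rest, mul_assoc]
      simp

lemma pathProb_pre (pre : List S) :
    ∀ (l hist : List S),
      G.pathProb (fun w => σ (pre ++ w)) hist l = G.pathProb σ (pre ++ hist) l := by
  intro l
  induction l with
  | nil => intro hist; simp [pathProb]
  | cons a rest ih =>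
    intro hist
    cases rest with
    | nil => simp [pathProb]
    | cons b t =>
      simp only [pathProb, step]
      rw [ih (hist ++ [a]), List.append_assoc]

lemma pathProb_eq_zero (hσ : G.IsStrategy σ) :
    ∀ (l hist : List S) (i : ℕ) (hi : i + 1 < l.length),
      l[i+1] ∉ G.E l[i] → G.pathProb σ hist l = 0 := by
  intro l
  induction l with
  | nil => intro hist i hi; simp at hi
  | cons a rest ih =>
    intro hist i hi hbad
    cases rest with
    | nil => simp at hi
    | cons b t =>
      simp only [pathProb]
      rcases Nat.eq_zero_or_pos i with h0 | hpos
      · subst h0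
        simp only [List.getElem_cons_zero, List.getElem_cons_succ] at hbad
        rw [step_eq_zero G σ hσ hist hbad, zero_mul]
      · obtain ⟨j, rfl⟩ := Nat.exists_eq_add_of_lt hpos
        rw [ih (hist ++ [a]) (0 + j) (by simpa using hi) (by simpa using hbad), mul_zero]

lemma sum_pathProb_cons (hσ : G.IsStrategy σ) :
    ∀ (m : ℕ) (hist : List S) (z : S),
      ∑ v : Fin m → S, G.pathProb σ hist (z :: List.ofFn v) = 1 := by
  intro m
  induction m with
  | zero => intro hist z; simp [pathProb]
  | succ m ih =>
    intro hist z
    rw [← step_sum G σ hσ hist z]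
    rw [Fintype.sum_equiv (Fin.consEquiv fun _ : Fin (m+1) => S).symm.symm
      (fun v : S × (Fin m → S) => G.pathProb σ hist (z :: List.ofFn ((Fin.consEquiv fun _ : Fin (m+1) => S).symm.symm v)))
      (fun v => G.pathProb σ hist (z :: List.ofFn v)) (fun v => rfl) |>.symm]
    rw [Fintype.sum_prod_type]
    refine Finset.sum_congr rfl (fun t _ => ?_)
    have hz : ∀ v : Fin m → S,
        List.ofFn ((Fin.consEquiv fun _ : Fin (m+1) => S).symm.symm (t, v)) = t :: List.ofFn v := by
      intro v
      rw [List.ofFn_succ]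
      rfl
    calc ∑ v : Fin m → S, G.pathProb σ hist (z :: List.ofFn ((Fin.consEquiv fun _ : Fin (m+1) => S).symm.symm (t, v)))
        = ∑ v : Fin m → S, G.step σ hist z t * G.pathProb σ (hist ++ [z]) (t :: List.ofFn v) := by
          refine Finset.sum_congr rfl (fun v _ => ?_)
          rw [hz v]
          simp [pathProb]
      _ = G.step σ hist z t := by rw [← Finset.mul_sum, ih (hist ++ [z]) t, mul_one]

lemma sum_pathProb_ext (hσ : G.IsStrategy σ) (m : ℕ) (hist : List S) (l : List S) (hl : l ≠ []) :
    ∑ v : Fin m → S, G.pathProb σ hist (l ++ List.ofFn v) = G.pathProb σ hist l := by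
  obtain ⟨l', z, rfl⟩ : ∃ l' z, l = l' ++ [z] := ⟨l.dropLast, l.getLast hl, (l.dropLast_concat_getLast hl).symm⟩
  have h1 : ∀ v : Fin m → S, (l' ++ [z]) ++ List.ofFn v = l' ++ z :: List.ofFn v := by
    intro v; simp
  calc ∑ v : Fin m → S, G.pathProb σ hist ((l' ++ [z]) ++ List.ofFn v)
      = ∑ v : Fin m → S, G.pathProb σ hist (l' ++ [z]) * G.pathProb σ (hist ++ l') (z :: List.ofFn v) := by
        refine Finset.sum_congr rfl (fun v _ => ?_)
        rw [h1 v, pathProb_append]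
    _ = G.pathProb σ hist (l' ++ [z]) := by
        rw [← Finset.mul_sum, sum_pathProb_cons G σ hσ m (hist ++ l') z, mul_one]

lemma mem_Cyl {ω : ℕ → S} {l : List S} :
    ω ∈ Cyl l ↔ ∀ (i : ℕ) (h : i < l.length), ω i = l[i] := by
  constructor
  · intro hm i h; exact hm ⟨i, h⟩
  · intro hm i; exact hm i.1 i.2

lemma Cyl_nil : Cyl ([] : List S) = Set.univ := by
  ext ω; simp [Cyl]

lemma Cyl_split (pre : List S) (z : S) (rest : List S) :
    Cyl (pre ++ [z]) ∩ (fun (ω : ℕ → S) => fun n => ω (n + pre.length)) ⁻¹' Cyl (z :: rest)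
      = Cyl (pre ++ z :: rest) := by
  have hlen : (pre ++ [z]).length = pre.length + 1 := by simp
  ext ω
  simp only [Set.mem_inter_iff, Set.mem_preimage, mem_Cyl]
  constructor
  · rintro ⟨h1, h2⟩ i hi
    rw [List.length_append, List.length_cons] at hi
    rcases Nat.lt_or_ge i pre.length with hlt | hge
    · rw [List.getElem_append_left hlt]
      have := h1 i (by omega)
      rwa [List.getElem_append_left hlt] at this
    · have hj : i - pre.length < (z :: rest).length := by simp; omega
      have := h2 (i - pre.length) hj
      rw [List.getElem_append_right hge]
      rwa [Nat.sub_add_cancel hge] at this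
  · intro h
    constructor
    · intro i hi
      rw [hlen] at hi
      have := h i (by simp; omega)
      rcases Nat.lt_or_ge i pre.length with hlt | hge
      · rw [List.getElem_append_left hlt] at this ⊢
        exact this
      · have : i = pre.length := by omega
        subst this
        have h2 := h pre.length (by simp)
        rw [List.getElem_append_right (le_refl _)] at h2 ⊢
        simpa using h2
    · intro j hj
      have := h (j + pre.length) (by simp at hj ⊢; omega)
      rw [List.getElem_append_right (by omega)] at this
      rw [this]
      congr 1
      omega

lemma Cyl_disj (pre : List S) (z a : S) (rest : List S) (hne : a ≠ z) :
    Cyl (pre ++ [z]) ∩ (fun (ω : ℕ → S) => fun n => ω (n + pre.length)) ⁻¹' Cyl (a :: rest)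
      = ∅ := by
  ext ω
  simp only [Set.mem_inter_iff, Set.mem_preimage, mem_Cyl, Set.mem_empty_iff_false, iff_false]
  rintro ⟨h1, h2⟩
  have hz := h1 pre.length (by simp)
  have ha := h2 0 (by simp)
  rw [List.getElem_append_right (le_refl _)] at hz
  simp at hz ha
  rw [ha] at hz
  exact hne hz

open scoped Classical in
/-- The generating function of the outer measure `Pr`. -/
noncomputable def mfun (G : MDP S) (σ : List S → S → S → ℝ≥0∞) (s : S) :
    Set (ℕ → S) → ℝ≥0∞ :=
  fun A => if A = ∅ then 0 else ⨅ (l : List S) (_ : A = Cyl l), G.cylWeight σ s l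

lemma mfun_empty (s : S) : G.mfun σ s ∅ = 0 := by simp [mfun]

lemma Pr_eq (s : S) (Φ : Set (ℕ → S)) :
    G.Pr σ s Φ = OuterMeasure.ofFunction (G.mfun σ s) (G.mfun_empty σ s) Φ := rfl

lemma mfun_le {s : S} {A : Set (ℕ → S)} {l : List S} (h : A = Cyl l) :
    G.mfun σ s A ≤ G.cylWeight σ s l := by
  by_cases hA : A = ∅
  · simp [mfun, hA]
  · rw [mfun, if_neg hA]
    exact iInf₂_le l h

lemma Pr_le_mfun (s : S) (A : Set (ℕ → S)) : G.Pr σ s A ≤ G.mfun σ s A := by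
  rw [Pr_eq]; exact OuterMeasure.ofFunction_le A

lemma Pr_mono (s : S) {A B : Set (ℕ → S)} (h : A ⊆ B) : G.Pr σ s A ≤ G.Pr σ s B := by
  rw [Pr_eq, Pr_eq]; exact measure_mono h

lemma Pr_le_cylWeight (s : S) {A : Set (ℕ → S)} {l : List S} (h : A ⊆ Cyl l) :
    G.Pr σ s A ≤ G.cylWeight σ s l :=
  le_trans (G.Pr_mono σ s h) (le_trans (G.Pr_le_mfun σ s _) (G.mfun_le σ rfl))

lemma Pr_le_one (s : S) (Φ : Set (ℕ → S)) : G.Pr σ s Φ ≤ 1 := by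
  have h : Φ ⊆ Cyl ([] : List S) := by rw [Cyl_nil]; exact Set.subset_univ _
  simpa [cylWeight] using G.Pr_le_cylWeight σ s h

lemma Pr_iUnion_le {ι : Type*} [Countable ι] (s : S) (f : ι → Set (ℕ → S)) :
    G.Pr σ s (⋃ i, f i) ≤ ∑' i, G.Pr σ s (f i) := by
  simp only [Pr_eq]; exact measure_iUnion_le f

lemma cylWeight_eq_pathProb {s : S} {l : List S} (h : l.head? = some s) :
    G.cylWeight σ s l = G.pathProb σ [] l := by
  cases l with
  | nil => simp at h
  | cons a rest =>
    simp only [List.head?_cons, Option.some.injEq] at h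
    subst h
    simp [cylWeight]

lemma markov (hσ : G.IsStrategy σ) (s z : S) (pre : List S)
    (hhead : (pre ++ [z]).head? = some s) (Φ : Set (ℕ → S)) :
    G.Pr σ s (Cyl (pre ++ [z]) ∩ (fun (ω : ℕ → S) => fun n => ω (n + pre.length)) ⁻¹' Φ)
      ≤ G.pathProb σ [] (pre ++ [z]) * G.Pr (fun w => σ (pre ++ w)) z Φ := by
  set σ' := fun w => σ (pre ++ w) with hσ'def
  set w := G.pathProb σ [] (pre ++ [z]) with hwdef
  have hw1 : w ≤ 1 := G.pathProb_le_one σ hσ _ _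
  have hwhead : G.cylWeight σ s (pre ++ [z]) = w := G.cylWeight_eq_pathProb σ hhead
  by_cases hw0 : w = 0
  · refine le_trans (G.Pr_le_cylWeight σ s Set.inter_subset_left) ?_
    rw [hwhead, hw0, zero_mul]
  set W := G.Pr σ' z Φ with hWdef
  have hW1 : W ≤ 1 := G.Pr_le_one σ' z Φ
  apply ENNReal.le_of_forall_pos_le_add
  intro ε hε _
  have hε2 : (ε : ℝ≥0∞) / 2 ≠ 0 := by
    simp only [ne_eq, ENNReal.div_eq_zero_iff]
    push_neg
    exact ⟨by exact_mod_cast hε.ne', by norm_num⟩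
  obtain ⟨δ, hδpos, hδsum⟩ := ENNReal.exists_pos_sum_of_countable hε2 ℕ
  have h1 : W < W + (ε : ℝ≥0∞) / 2 :=
    ENNReal.lt_add_right (ne_top_of_le_ne_top (by norm_num) hW1) hε2
  conv at h1 => lhs; rw [hWdef, Pr_eq, OuterMeasure.ofFunction_apply]
  obtain ⟨f, hf⟩ := iInf_lt_iff.1 h1
  obtain ⟨hsub, hlt⟩ := iInf_lt_iff.1 hf
  have hchoice : ∀ i : ℕ, ∃ B : Set (ℕ → S),
      (Cyl (pre ++ [z]) ∩ (fun (ω : ℕ → S) => fun n => ω (n + pre.length)) ⁻¹' (f i)) ⊆ B ∧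
      G.mfun σ s B ≤ w * G.mfun σ' z (f i) + w * δ i := by
    intro i
    by_cases hfe : f i = ∅
    · exact ⟨∅, by simp [hfe], by simp [mfun_empty]⟩
    set M := G.mfun σ' z (f i) with hMdef
    have hMfin : M ≠ ⊤ := ne_top_of_lt (lt_of_le_of_lt (ENNReal.le_tsum i) hlt)
    have h2 : M < M + δ i := ENNReal.lt_add_right hMfin (by exact_mod_cast (hδpos i).ne')
    have hMeq : M = ⨅ (l : List S) (_ : f i = Cyl l), G.cylWeight σ' z l := by
      rw [hMdef, mfun, if_neg hfe]
    rw [hMeq] at h2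
    obtain ⟨l, hl⟩ := iInf_lt_iff.1 h2
    obtain ⟨hCl, hwl⟩ := iInf_lt_iff.1 hl
    rw [← hMeq] at hwl
    cases l with
    | nil =>
      refine ⟨Cyl (pre ++ [z]), Set.inter_subset_left, ?_⟩
      have hb : G.mfun σ s (Cyl (pre ++ [z])) ≤ w := le_of_le_of_eq (G.mfun_le σ rfl) hwhead
      refine le_trans hb ?_
      have h3 : (1 : ℝ≥0∞) ≤ M + δ i := by
        have := hwl
        simp only [cylWeight] at this
        exact this.le
      calc w = w * 1 := (mul_one w).symm
        _ ≤ w * (M + δ i) := mul_le_mul_right h3 w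
        _ = w * M + w * δ i := mul_add w _ _
    | cons a rest =>
      by_cases haz : a = z
      · subst haz
        refine ⟨Cyl (pre ++ a :: rest), ?_, ?_⟩
        · rw [hCl, Cyl_split]
        · have hh2 : (pre ++ a :: rest).head? = some s := by
            rw [List.head?_append] at hhead ⊢
            cases hp : pre.head? with
            | some b => simpa [hp] using hhead
            | none => simpa [hp] using hhead
          have hb : G.mfun σ s (Cyl (pre ++ a :: rest)) ≤ G.pathProb σ [] (pre ++ a :: rest) :=
            le_of_le_of_eq (G.mfun_le σ rfl) (G.cylWeight_eq_pathProb σ hh2)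
          refine le_trans hb ?_
          rw [G.pathProb_append σ pre [] a rest, ← hwdef]
          have hps : G.cylWeight σ' a (a :: rest) = G.pathProb σ ([] ++ pre) (a :: rest) := by
            have h4 : G.cylWeight σ' a (a :: rest) = G.pathProb σ' [] (a :: rest) := by
              rw [cylWeight, if_pos rfl]
            rw [h4, hσ'def, G.pathProb_pre σ pre (a :: rest) []]
            simp
          rw [← hps]
          calc w * G.cylWeight σ' a (a :: rest) ≤ w * (M + δ i) := mul_le_mul_right hwl.le w
            _ = w * M + w * δ i := mul_add w _ _
      · refine ⟨∅, ?_, by simp [mfun_empty]⟩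
        rw [hCl, Cyl_disj pre z a rest haz]
  choose B hBsub hBle using hchoice
  have hsub2 : Cyl (pre ++ [z]) ∩ (fun (ω : ℕ → S) => fun n => ω (n + pre.length)) ⁻¹' Φ
      ⊆ ⋃ i, B i := by
    rintro ω ⟨h1m, h2m⟩
    obtain ⟨A, ⟨i, rfl⟩, hi⟩ := hsub h2m
    exact Set.mem_iUnion.2 ⟨i, hBsub i ⟨h1m, hi⟩⟩
  calc G.Pr σ s (Cyl (pre ++ [z]) ∩ (fun (ω : ℕ → S) => fun n => ω (n + pre.length)) ⁻¹' Φ)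
      ≤ G.Pr σ s (⋃ i, B i) := G.Pr_mono σ s hsub2
    _ ≤ ∑' i, G.Pr σ s (B i) := G.Pr_iUnion_le σ s B
    _ ≤ ∑' i, G.mfun σ s (B i) :=
        ENNReal.tsum_le_tsum (fun i => G.Pr_le_mfun σ s (B i))
    _ ≤ ∑' i, (w * G.mfun σ' z (f i) + w * δ i) := ENNReal.tsum_le_tsum hBle
    _ = w * (∑' i, G.mfun σ' z (f i)) + w * ∑' i, (δ i : ℝ≥0∞) := by
        rw [ENNReal.tsum_add, ENNReal.tsum_mul_left, ENNReal.tsum_mul_left]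
    _ ≤ w * (W + (ε : ℝ≥0∞) / 2) + 1 * ((ε : ℝ≥0∞) / 2) :=
        add_le_add (mul_le_mul_right hlt.le w) (mul_le_mul hw1 hδsum.le zero_le zero_le)
    _ = w * W + (w * ((ε : ℝ≥0∞) / 2) + (ε : ℝ≥0∞) / 2) := by ring
    _ ≤ w * W + ((ε : ℝ≥0∞) / 2 + (ε : ℝ≥0∞) / 2) := by
        gcongr
        calc w * ((ε : ℝ≥0∞)/2) ≤ 1 * ((ε : ℝ≥0∞)/2) := mul_le_mul_left hw1 _
          _ = (ε : ℝ≥0∞)/2 := one_mul _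
    _ = w * W + ε := by rw [ENNReal.add_halves]

/-- First-entry histories into `Z`: paths from `s` staying in `C \ Z` until they
hit `Z` at the last state. -/
def FE (G : MDP S) (C Z : Set S) (s : S) (l : List S) : Prop :=
  ∃ (m : List S) (z : S), l = (s :: m) ++ [z] ∧ z ∈ Z ∧
    (∀ x ∈ s :: m, x ∈ C ∧ x ∉ Z) ∧
    List.Chain' (fun a b => b ∈ G.E a) ((s :: m) ++ [z])

lemma FE_antichain {C Z : Set S} {s : S} {l1 l2 : List S}
    (h1 : G.FE C Z s l1) (h2 : G.FE C Z s l2) (hp : l1 <+: l2) : l1 = l2 := by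
  obtain ⟨m1, z1, rfl, hz1, hm1, -⟩ := h1
  obtain ⟨m2, z2, rfl, hz2, hm2, -⟩ := h2
  rcases eq_or_lt_of_le (List.IsPrefix.length_le hp) with heq | hlt
  · exact hp.eq_of_length heq
  · exfalso
    have hle : ((s :: m1) ++ [z1]).length ≤ (s :: m2).length := by
      simp only [List.length_append, List.length_cons, List.length_nil] at hlt ⊢
      omega
    have hp2 : (s :: m1) ++ [z1] <+: s :: m2 :=
      List.prefix_of_prefix_length_le hp (List.prefix_append _ _) hle
    have hz1mem : z1 ∈ s :: m2 := hp2.subset (by simp)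
    exact (hm2 z1 hz1mem).2 hz1

lemma sum_cylWeight_total (hσ : G.IsStrategy σ) (s : S) (n : ℕ) :
    ∑ v : Fin (n+1) → S, G.cylWeight σ s (List.ofFn v) = 1 := by
  classical
  rw [Fintype.sum_equiv (Fin.consEquiv fun _ : Fin (n+1) => S).symm.symm
    (fun p : S × (Fin n → S) => G.cylWeight σ s (List.ofFn ((Fin.consEquiv fun _ : Fin (n+1) => S).symm.symm p)))
    (fun v => G.cylWeight σ s (List.ofFn v)) (fun p => rfl) |>.symm]
  rw [Fintype.sum_prod_type]
  have hz : ∀ (a : S) (u : Fin n → S),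
      List.ofFn ((Fin.consEquiv fun _ : Fin (n+1) => S).symm.symm (a, u)) = a :: List.ofFn u := by
    intro a u
    rw [List.ofFn_succ]
    rfl
  have hstep : ∀ a : S, ∑ u : Fin n → S, G.cylWeight σ s (a :: List.ofFn u)
      = if a = s then 1 else 0 := by
    intro a
    by_cases ha : a = s
    · subst ha
      simp only [cylWeight, if_pos rfl]
      exact G.sum_pathProb_cons σ hσ n [] a
    · simp [cylWeight, ha]
  calc ∑ a : S, ∑ u : Fin n → S, G.cylWeight σ s (List.ofFn ((Fin.consEquiv fun _ : Fin (n+1) => S).symm.symm (a, u)))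
      = ∑ a : S, ∑ u : Fin n → S, G.cylWeight σ s (a :: List.ofFn u) := by
        refine Finset.sum_congr rfl fun a _ => Finset.sum_congr rfl fun u _ => by rw [hz]
    _ = ∑ a : S, if a = s then 1 else 0 := Finset.sum_congr rfl fun a _ => hstep a
    _ = 1 := by simp

open scoped Classical in
lemma tsum_FE_le_one (hσ : G.IsStrategy σ) (C Z : Set S) (s : S) :
    ∑' l : List S, (if G.FE C Z s l then G.cylWeight σ s l else 0) ≤ 1 := by
  rw [ENNReal.tsum_eq_iSup_sum]
  refine iSup_le fun F => ?_
  rw [← Finset.sum_filter]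
  set F' := F.filter (G.FE C Z s) with hF'
  have hFE : ∀ l ∈ F', G.FE C Z s l := fun l hl => (Finset.mem_filter.1 hl).2
  set m := F'.sup List.length with hm
  set n := m + 1 with hn
  have hlen_le : ∀ l ∈ F', l.length ≤ n := fun l hl =>
    le_trans (Finset.le_sup hl) (Nat.le_succ m)
  set Ext : List S → Finset (List S) :=
    fun l => Finset.image (fun v : Fin (n - l.length) → S => l ++ List.ofFn v) Finset.univ
    with hExt
  have hExtInj : ∀ l : List S, ∀ x ∈ (Finset.univ : Finset (Fin (n - l.length) → S)),
      ∀ y ∈ (Finset.univ : Finset (Fin (n - l.length) → S)),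
      l ++ List.ofFn x = l ++ List.ofFn y → x = y := by
    intro l x _ y _ hxy
    exact List.ofFn_injective (List.append_cancel_left hxy)
  have hw_ext : ∀ l ∈ F', ∑ e ∈ Ext l, G.cylWeight σ s e = G.cylWeight σ s l := by
    intro l hl
    obtain ⟨m1, z1, hleq, -, -, -⟩ := hFE l hl
    have hhead : l.head? = some s := by rw [hleq]; rfl
    rw [hExt, Finset.sum_image (hExtInj l)]
    have hheadext : ∀ v : Fin (n - l.length) → S, (l ++ List.ofFn v).head? = some s := by
      intro v
      rw [List.head?_append, hhead]
      rfl
    calc ∑ v : Fin (n - l.length) → S, G.cylWeight σ s (l ++ List.ofFn v)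
        = ∑ v : Fin (n - l.length) → S, G.pathProb σ [] (l ++ List.ofFn v) :=
          Finset.sum_congr rfl fun v _ => G.cylWeight_eq_pathProb σ (hheadext v)
      _ = G.pathProb σ [] l := G.sum_pathProb_ext σ hσ _ [] l (by rw [hleq]; simp)
      _ = G.cylWeight σ s l := (G.cylWeight_eq_pathProb σ hhead).symm
  have hdisj : (F' : Set (List S)).PairwiseDisjoint Ext := by
    intro l1 hl1 l2 hl2 hne
    simp only [Function.onFun]
    rw [Finset.disjoint_left]
    intro e he1 he2
    simp only [hExt, Finset.mem_image, Finset.mem_univ, true_and] at he1 he2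
    obtain ⟨v1, hv1⟩ := he1
    obtain ⟨v2, hv2⟩ := he2
    have hp1 : l1 <+: e := hv1 ▸ List.prefix_append _ _
    have hp2 : l2 <+: e := hv2 ▸ List.prefix_append _ _
    have h12 : l1 = l2 := by
      rcases le_total l1.length l2.length with hle | hle
      · exact G.FE_antichain (hFE l1 hl1) (hFE l2 hl2)
          (List.prefix_of_prefix_length_le hp1 hp2 hle)
      · exact (G.FE_antichain (hFE l2 hl2) (hFE l1 hl1)
          (List.prefix_of_prefix_length_le hp2 hp1 hle)).symm
    exact hne h12
  have hsplit : ∑ l ∈ F', G.cylWeight σ s l = ∑ e ∈ F'.biUnion Ext, G.cylWeight σ s e := by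
    rw [Finset.sum_biUnion hdisj]
    exact Finset.sum_congr rfl fun l hl => (hw_ext l hl).symm
  set AllN : Finset (List S) := Finset.image (fun v : Fin n → S => List.ofFn v) Finset.univ
    with hAllN
  have hsubN : F'.biUnion Ext ⊆ AllN := by
    intro e he
    obtain ⟨l, hl, he2⟩ := Finset.mem_biUnion.1 he
    simp only [hExt, Finset.mem_image, Finset.mem_univ, true_and] at he2
    obtain ⟨v, hv⟩ := he2
    have hlen : e.length = n := by
      rw [← hv, List.length_append, List.length_ofFn]
      have := hlen_le l hl
      omega
    rw [hAllN, Finset.mem_image]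
    refine ⟨fun i => e[i.1]'(by rw [hlen]; exact i.2), Finset.mem_univ _, ?_⟩
    refine List.ext_getElem (by simp [hlen]; omega) fun i h1 h2 => ?_
    rw [List.getElem_ofFn]
  calc ∑ l ∈ F', G.cylWeight σ s l
      = ∑ e ∈ F'.biUnion Ext, G.cylWeight σ s e := hsplit
    _ ≤ ∑ e ∈ AllN, G.cylWeight σ s e := Finset.sum_le_sum_of_subset hsubN
    _ = ∑ v : Fin n → S, G.cylWeight σ s (List.ofFn v) := by
        rw [hAllN, Finset.sum_image (fun x _ y _ h => List.ofFn_injective h)]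
    _ = 1 := G.sum_cylWeight_total σ hσ s m

lemma prefL_get (ω : ℕ → S) (N i : ℕ)
    (h : i < (ω 0 :: List.ofFn (fun j : Fin N => ω (j.1+1))).length) :
    (ω 0 :: List.ofFn (fun j : Fin N => ω (j.1+1)))[i] = ω i := by
  cases i with
  | zero => rfl
  | succ i => simp [List.getElem_cons_succ, List.getElem_ofFn]

lemma mem_Cyl_prefL (ω : ℕ → S) (N : ℕ) :
    ω ∈ Cyl (ω 0 :: List.ofFn (fun j : Fin N => ω (j.1+1))) :=
  mem_Cyl.2 fun i h => (prefL_get ω N i h).symm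

lemma buchi_shift {T : Set S} {ω : ℕ → S} (hω : ω ∈ BuchiEvent T) (k : ℕ) :
    (fun n => ω (n + k)) ∈ BuchiEvent T := by
  obtain ⟨t, htT, hinf⟩ := hω
  refine ⟨t, htT, ?_⟩
  have h1 : ({i | ω i = t} \ {i | i < k}).Infinite := hinf.diff (Set.finite_lt_nat k)
  have h2 : ({i | ω i = t} \ {i | i < k}) ⊆ Set.range (· + k) := by
    rintro i ⟨-, hik⟩
    simp only [Set.mem_setOf_eq, not_lt] at hik
    exact ⟨i - k, by show i - k + k = i; omega⟩
  refine Set.Infinite.mono ?_ (h1.preimage h2)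
  rintro n ⟨hn, -⟩
  exact hn

open scoped Classical in
/-- The covering sets used to decompose the Büchi event. -/
noncomputable def Kset (G : MDP S) (σ : List S → S → S → ℝ≥0∞) (T C Z : Set S) (s : S)
    (l : List S) : Set (ℕ → S) :=
  if G.FE C Z s l then
    Cyl l ∩ (fun (ω : ℕ → S) => fun n => ω (n + (l.length - 1))) ⁻¹' BuchiEvent T
  else if G.cylWeight σ s l = 0 then Cyl l else ∅

lemma buchi_cover (hσ : G.IsStrategy σ) (T C Z : Set S) (s : S) (hCT : Disjoint C T)
    (hsC : s ∈ C) (hsZ : s ∉ Z) (hE : ∀ c ∈ C, ∀ t ∈ G.E c, t ∈ C ∪ Z) :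
    BuchiEvent T ⊆ ⋃ l : List S, G.Kset σ T C Z s l := by
  classical
  intro ω hω
  have hiT : ∃ i, ω i ∈ T := by
    obtain ⟨t, htT, hinf⟩ := hω
    obtain ⟨i, hi⟩ := hinf.nonempty
    exact ⟨i, by rw [Set.mem_setOf_eq] at hi; rw [hi]; exact htT⟩
  by_cases h0 : ω 0 = s
  case neg =>
    refine Set.mem_iUnion.2 ⟨[ω 0], ?_⟩
    have hFE : ¬ G.FE C Z s [ω 0] := by
      rintro ⟨m, z, heq, -, -, -⟩
      have := congrArg List.length heq
      simp at this
    have hw : G.cylWeight σ s [ω 0] = 0 := by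
      simp [cylWeight, h0]
    rw [Kset, if_neg hFE, if_pos hw]
    refine mem_Cyl.2 fun i hi => ?_
    have hi0 : i = 0 := by simp at hi; omega
    subst hi0; rfl
  case pos =>
  subst h0
  by_cases hedge : ∀ k, ω (k+1) ∈ G.E (ω k)
  case neg =>
    push_neg at hedge
    have hk := Nat.find_spec hedge
    set k := Nat.find hedge with hkdef
    set l : List S := ω 0 :: List.ofFn (fun j : Fin (k+1) => ω (j.1+1)) with hl
    have hlget : ∀ (i : ℕ) (h : i < l.length), l[i] = ω i := fun i h => prefL_get ω (k+1) i h
    have hllen : l.length = k + 2 := by simp [hl]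
    refine Set.mem_iUnion.2 ⟨l, ?_⟩
    have hFE : ¬ G.FE C Z (ω 0) l := by
      rintro ⟨m, z, heq, -, -, hch⟩
      rw [← heq] at hch
      have := List.isChain_iff_getElem.1 hch k (by rw [hllen]; omega)
      rw [hlget k (by omega), hlget (k+1) (by omega)] at this
      exact hk this
    have hw : G.cylWeight σ (ω 0) l = 0 := by
      have hhead : l.head? = some (ω 0) := rfl
      rw [G.cylWeight_eq_pathProb σ hhead]
      refine G.pathProb_eq_zero σ hσ l [] k (by omega) ?_
      rw [hlget k (by omega), hlget (k+1) (by omega)]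
      exact hk
    rw [Kset, if_neg hFE, if_pos hw]
    exact mem_Cyl_prefL ω (k+1)
  case pos =>
  have hexZ : ∃ k, ω k ∈ Z := by
    by_contra hnoZ
    push_neg at hnoZ
    have hC : ∀ k, ω k ∈ C := by
      intro k
      induction k with
      | zero => exact hsC
      | succ k ih =>
        rcases hE (ω k) ih (ω (k+1)) (hedge k) with h | h
        · exact h
        · exact absurd h (hnoZ (k+1))
    obtain ⟨i, hiT⟩ := hiT
    exact Set.disjoint_left.1 hCT (hC i) hiT
  have hkZ := Nat.find_spec hexZ
  have hmin : ∀ j, j < Nat.find hexZ → ω j ∉ Z := fun j hj => Nat.find_min hexZ hj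
  obtain ⟨k', hk⟩ : ∃ k', Nat.find hexZ = k' + 1 := by
    rcases Nat.eq_zero_or_pos (Nat.find hexZ) with h | h
    · rw [h] at hkZ; exact absurd hkZ hsZ
    · exact ⟨Nat.find hexZ - 1, by omega⟩
  rw [hk] at hkZ hmin
  have hCj : ∀ j, j < k' + 1 → ω j ∈ C := by
    intro j
    induction j with
    | zero => intro _; exact hsC
    | succ j ih =>
      intro hj
      rcases hE (ω j) (ih (by omega)) (ω (j+1)) (hedge j) with h | h
      · exact h
      · exact absurd h (hmin (j+1) hj)
  set l : List S := ω 0 :: List.ofFn (fun j : Fin (k'+1) => ω (j.1+1)) with hl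
  have hlget : ∀ (i : ℕ) (h : i < l.length), l[i] = ω i := fun i h => prefL_get ω (k'+1) i h
  have hllen : l.length = k' + 2 := by simp [hl]
  set m : List S := List.ofFn (fun j : Fin k' => ω (j.1+1)) with hmdef
  have hsplit : l = (ω 0 :: m) ++ [ω (k'+1)] := by
    rw [hl, hmdef]
    have htail : List.ofFn (fun j : Fin (k'+1) => ω (j.1+1))
        = List.ofFn (fun j : Fin k' => ω (j.1+1)) ++ [ω (k'+1)] := by
      rw [List.ofFn_succ']
      simp [List.concat_eq_append]
    rw [htail]
    rfl
  have hFEl : G.FE C Z (ω 0) l := by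
    refine ⟨m, ω (k'+1), hsplit, hkZ, ?_, ?_⟩
    · intro x hx
      rcases List.mem_cons.1 hx with rfl | hx
      · exact ⟨hsC, hsZ⟩
      · rw [hmdef, List.mem_ofFn] at hx
        obtain ⟨j, hj⟩ := hx
        rw [← hj]
        exact ⟨hCj (j.1+1) (by omega), hmin (j.1+1) (by omega)⟩
    · rw [← hsplit]
      refine List.isChain_iff_getElem.2 fun i hi => ?_
      rw [hlget i (by omega), hlget (i+1) (by rw [hllen] at hi ⊢; omega)]
      exact hedge i
  refine Set.mem_iUnion.2 ⟨l, ?_⟩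
  rw [Kset, if_pos hFEl]
  refine ⟨mem_Cyl_prefL ω (k'+1), ?_⟩
  have : l.length - 1 = k' + 1 := by omega
  rw [this]
  exact buchi_shift hω (k'+1)

lemma cylWeight_le_one (hσ : G.IsStrategy σ) (s : S) (l : List S) :
    G.cylWeight σ s l ≤ 1 := by
  cases l with
  | nil => simp [cylWeight]
  | cons a rest =>
    simp only [cylWeight]
    split_ifs
    · exact G.pathProb_le_one σ hσ _ _
    · exact zero_le

open scoped Classical in
lemma Pr_Kset_le (hσ : G.IsStrategy σ) (T C Z : Set S) (s : S) (l : List S) :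
    G.Pr σ s (G.Kset σ T C Z s l)
      ≤ if G.FE C Z s l then
          G.cylWeight σ s l * G.Pr (fun w => σ (l.dropLast ++ w)) (l.getLastD s) (BuchiEvent T)
        else 0 := by
  by_cases hfe : G.FE C Z s l
  · rw [Kset, if_pos hfe, if_pos hfe]
    obtain ⟨m, z, hleq, hzZ, hmem, hch⟩ := hfe
    subst hleq
    have hdrop : ((s :: m) ++ [z]).dropLast = s :: m := List.dropLast_concat
    have hlast : ((s :: m) ++ [z]).getLastD s = z := List.getLastD_concat
    have hlen : ((s :: m) ++ [z]).length - 1 = (s :: m).length := by simp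
    have hhead : ((s :: m) ++ [z]).head? = some s := rfl
    rw [hdrop, hlast, hlen, G.cylWeight_eq_pathProb σ hhead]
    exact G.markov σ hσ s z (s :: m) hhead (BuchiEvent T)
  · rw [Kset, if_neg hfe, if_neg hfe]
    by_cases hw : G.cylWeight σ s l = 0
    · rw [if_pos hw]
      exact le_of_le_of_eq (G.Pr_le_cylWeight σ s (subset_refl _)) hw
    · rw [if_neg hw]
      exact le_trans (G.Pr_le_mfun σ s ∅) (le_of_eq (G.mfun_empty σ s))
end Aux
end MDP

/-- If `C` is disjoint from `T`, `Z` is disjoint from the almost-sure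
winning set, and all successors of states of `C` lie in `C ∪ Z`, then `C` is disjoint
from the almost-sure winning set: from every state of `C`, every strategy satisfies the
Büchi objective with probability < 1. -/
theorem stmt8 {S : Type*} [Fintype S] [DecidableEq S] (G : MDP S) (T C Z : Set S)
    (hCT : Disjoint C T)
    (hZ : Disjoint Z (G.winAS (BuchiEvent T)))
    (hE : ∀ s ∈ C, ∀ t ∈ G.E s, t ∈ C ∪ Z) :
    Disjoint C (G.winAS (BuchiEvent T)) ∧
    ∀ s ∈ C, ∀ σ, G.IsStrategy σ → G.Pr σ s (BuchiEvent T) < 1 := by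
  classical
  have main : ∀ s ∈ C, ∀ σ, G.IsStrategy σ → G.Pr σ s (BuchiEvent T) < 1 := by
    intro s hsC σ hσ
    rcases lt_or_eq_of_le (G.Pr_le_one σ s (BuchiEvent T)) with hlt | heq
    · exact hlt
    exfalso
    by_cases hsZ : s ∈ Z
    · exact Set.disjoint_left.1 hZ hsZ ⟨σ, hσ, heq⟩
    set p : List S → ℝ≥0∞ :=
      fun l => G.Pr (fun w => σ (l.dropLast ++ w)) (l.getLastD s) (BuchiEvent T) with hp
    set a : List S → ℝ≥0∞ := fun l => if G.FE C Z s l then G.cylWeight σ s l else 0 with ha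
    set q : List S → ℝ≥0∞ :=
      fun l => if G.FE C Z s l then G.cylWeight σ s l * p l else 0 with hq
    have hcover := G.buchi_cover σ hσ T C Z s hCT hsC hsZ hE
    have h1le : (1 : ℝ≥0∞) ≤ ∑' l : List S, q l := by
      rw [← heq]
      calc G.Pr σ s (BuchiEvent T)
          ≤ G.Pr σ s (⋃ l : List S, G.Kset σ T C Z s l) := G.Pr_mono σ s hcover
        _ ≤ ∑' l : List S, G.Pr σ s (G.Kset σ T C Z s l) := G.Pr_iUnion_le σ s _
        _ ≤ ∑' l : List S, q l :=
            ENNReal.tsum_le_tsum fun l => G.Pr_Kset_le σ hσ T C Z s l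
    have hqa : ∀ l, q l ≤ a l := by
      intro l
      simp only [ha, hq]
      by_cases hfe : G.FE C Z s l
      · rw [if_pos hfe, if_pos hfe]
        calc G.cylWeight σ s l * p l ≤ G.cylWeight σ s l * 1 :=
              mul_le_mul_right (G.Pr_le_one _ _ _) _
          _ = G.cylWeight σ s l := mul_one _
      · rw [if_neg hfe, if_neg hfe]
    have ha1 : ∑' l : List S, a l ≤ 1 := G.tsum_FE_le_one σ hσ C Z s
    have hsq : ∑' l : List S, q l = 1 :=
      le_antisymm (le_trans (ENNReal.tsum_le_tsum hqa) ha1) h1le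
    have hsa : ∑' l : List S, a l = 1 :=
      le_antisymm ha1 (le_trans h1le (ENNReal.tsum_le_tsum hqa))
    have hzero : ∑' l : List S, (a l - q l) = 0 := by
      have hadd : ∑' l : List S, q l + ∑' l : List S, (a l - q l) = ∑' l : List S, a l := by
        rw [← ENNReal.tsum_add]
        exact tsum_congr fun l => add_tsub_cancel_of_le (hqa l)
      rw [hsq, hsa] at hadd
      have h2 : (1 : ℝ≥0∞) + ∑' l : List S, (a l - q l) = 1 + 0 := by rw [hadd, add_zero]
      exact (ENNReal.add_right_inj ENNReal.one_ne_top).1 h2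
    have hall : ∀ l, a l ≤ q l := fun l =>
      tsub_eq_zero_iff_le.1 (ENNReal.tsum_eq_zero.1 hzero l)
    have hex : ∃ l, a l ≠ 0 := by
      by_contra hno
      push_neg at hno
      have h' : ∑' l : List S, a l = 0 := by
        rw [tsum_congr fun l => hno l, tsum_zero]
      rw [h'] at hsa
      exact zero_ne_one hsa
    obtain ⟨l, hla⟩ := hex
    have hfe : G.FE C Z s l := by
      by_contra hn
      simp only [ha] at hla
      simp [hn] at hla
    have hwne : G.cylWeight σ s l ≠ 0 := by
      simp only [ha] at hla
      simpa [hfe] using hla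
    have hwle : G.cylWeight σ s l ≤ 1 := G.cylWeight_le_one σ hσ s l
    have hple : p l ≤ 1 := G.Pr_le_one _ _ _
    have hmul : G.cylWeight σ s l * p l = G.cylWeight σ s l * 1 := by
      apply le_antisymm (mul_le_mul_right hple _)
      have h3 := hall l
      simp only [ha, hq] at h3
      rw [if_pos hfe, if_pos hfe] at h3
      rw [mul_one]
      exact h3
    have hp1 : p l = 1 :=
      (ENNReal.mul_right_inj hwne (ne_top_of_le_ne_top ENNReal.one_ne_top hwle)).1 hmul
    obtain ⟨m, z, hleq, hzZ, -, -⟩ := hfe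
    have hlast : l.getLastD s = z := by rw [hleq]; exact List.getLastD_concat
    have hstr : G.IsStrategy (fun w => σ (l.dropLast ++ w)) :=
      ⟨fun w s' h => hσ.1 _ s' h, fun w s' t' h h2 => hσ.2 _ s' t' h h2⟩
    have hwin : z ∈ G.winAS (BuchiEvent T) :=
      ⟨fun w => σ (l.dropLast ++ w), hstr, by rw [← hlast]; exact hp1⟩
    exact Set.disjoint_left.1 hZ hzZ hwin
  refine ⟨Set.disjoint_left.2 fun s hsC hsW => ?_, main⟩
  obtain ⟨σ, hσ2, hPr⟩ := hsW
  exact absurd hPr (ne_of_lt (main s hsC σ hσ2))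
end

section
/- Let G = (S,E) be a finite directed graph, let s be a vertex, and let FW(s) be the forward set of s. If (U,t) is a skeleton of FW(s), then (1) U is contained in FW(s), and (2) (U,t) is a spine-set of G, i.e., U is the vertex set of a chordless path of G ending in t. -/
/-- The forward set of `s`: all vertices reachable from `s`. -/
def FW {S : Type*} (E : S → S → Prop) (s : S) : Set S := {t | Relation.ReflTransGen E s t}

/-- There is a path from `s` to `t` passing only through vertices of `C`
(more precisely, all vertices after the first lie in `C`). -/
def GReachesIn {S : Type*} (E : S → S → Prop) (C : Set S) (s t : S) : Prop :=
  Relation.ReflTransGen (fun a b => E a b ∧ b ∈ C) s t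

/-- `C` is a strongly connected component: any two of its vertices are joined by a
path inside `C`, and `C` is maximal with this property. -/
def IsSCC {S : Type*} (E : S → S → Prop) (C : Set S) : Prop :=
  (∀ s ∈ C, ∀ t ∈ C, GReachesIn E C s t) ∧
  ∀ C' : Set S, C ⊆ C' → (∀ s ∈ C', ∀ t ∈ C', GReachesIn E C' s t) → C' = C

/-- A bottom scc: an scc all of whose outgoing edges stay inside it. -/
def IsBottomSCC {S : Type*} (E : S → S → Prop) (C : Set S) : Prop :=
  IsSCC E C ∧ ∀ s ∈ C, ∀ t, E s t → t ∈ C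

/-- A nonempty list of vertices forming a path (consecutive vertices are edges). -/
def IsPathList {S : Type*} (E : S → S → Prop) (l : List S) : Prop :=
  l ≠ [] ∧ l.Chain' E

/-- A path is chordless if there is no edge from `s_i` to `s_j` for `j > i + 1`. -/
def Chordless {S : Type*} (E : S → S → Prop) (l : List S) : Prop :=
  ∀ i j : Fin l.length, (i : ℕ) + 1 < (j : ℕ) → ¬ E (l.get i) (l.get j)

/-- `(U, s)` is a spine-set: `U` is the vertex set of a chordless path ending in `s`. -/
def IsSpineSet {S : Type*} (E : S → S → Prop) (U : Set S) (s : S) : Prop :=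
  ∃ l : List S, IsPathList E l ∧ Chordless E l ∧ l.getLast? = some s ∧ U = {x | x ∈ l}

/-- The distance from `s` to `t`: the least number of edges on a path from `s` to `t`. -/
noncomputable def gdist {S : Type*} (E : S → S → Prop) (s t : S) : ℕ :=
  sInf {n : ℕ | ∃ l : List S, IsPathList E l ∧ l.head? = some s ∧
    l.getLast? = some t ∧ l.length = n + 1}

/-- `(U, t)` is a skeleton of `FW(s)`: `t` is a vertex of `FW(s)` of maximum distance
from `s`, and `U` is the vertex set of some shortest path from `s` to `t`. -/
def IsSkeleton {S : Type*} (E : S → S → Prop) (s : S) (U : Set S) (t : S) : Prop :=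
  t ∈ FW E s ∧ (∀ u ∈ FW E s, gdist E s u ≤ gdist E s t) ∧
  ∃ l : List S, IsPathList E l ∧ l.head? = some s ∧ l.getLast? = some t ∧
    l.length = gdist E s t + 1 ∧ U = {x | x ∈ l}

private lemma reach_aux {S : Type*} {E : S → S → Prop} {l : List S} (hc : l.Chain' E)
    (i j : ℕ) (hij : i ≤ j) (hj : j < l.length) (hi : i < l.length) :
    Relation.ReflTransGen E l[i] l[j] := by
  induction j with
  | zero =>
    obtain rfl : i = 0 := Nat.le_zero.mp hij
    exact Relation.ReflTransGen.refl
  | succ k ih =>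
    rcases Nat.le_succ_iff.mp hij with h | rfl
    · exact (ih h (Nat.lt_of_succ_lt hj)).tail
        (List.isChain_iff_getElem.mp hc k (by omega))
    · exact Relation.ReflTransGen.refl

private lemma mem_FW_of_mem {S : Type*} {E : S → S → Prop} {l : List S} {s : S}
    (hc : l.Chain' E) (hh : l.head? = some s) {x : S} (hx : x ∈ l) : x ∈ FW E s := by
  obtain ⟨k, hk, rfl⟩ := List.mem_iff_getElem.mp hx
  have h0 : 0 < l.length := by omega
  have hs : l[0] = s := by
    rw [List.head?_eq_getElem?] at hh
    simpa [List.getElem?_eq_getElem h0] using hh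
  rw [← hs]
  exact reach_aux hc 0 k (Nat.zero_le k) hk h0

/-- If `(U, t)` is a skeleton of the forward set `FW(s)`, then
`U ⊆ FW(s)` and `(U, t)` is a spine-set of the graph. -/
theorem stmt13 {S : Type*} [Fintype S] (E : S → S → Prop) (s : S) (U : Set S) (t : S)
    (h : IsSkeleton E s U t) :
    U ⊆ FW E s ∧ IsSpineSet E U t := by
  obtain ⟨ht, hmax, l, ⟨hne, hc⟩, hh, hlast, hlen, hU⟩ := h
  constructor
  · intro x hx
    exact mem_FW_of_mem hc hh (by rwa [hU] at hx)
  · refine ⟨l, ⟨hne, hc⟩, ?_, hlast, hU⟩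
    -- Chordless: a chord would yield a shorter path from s to t
    intro i j hij hE
    set T : Set ℕ := {n : ℕ | ∃ l : List S, IsPathList E l ∧ l.head? = some s ∧
      l.getLast? = some t ∧ l.length = n + 1} with hT
    have hi : (i : ℕ) < l.length := i.isLt
    have hj : (j : ℕ) < l.length := j.isLt
    set l' : List S := l.take ((i : ℕ) + 1) ++ l.drop (j : ℕ) with hl'
    have hlen' : l'.length = ((i : ℕ) + 1) + (l.length - (j : ℕ)) := by
      simp [hl', Nat.min_eq_left (by omega : (i : ℕ) + 1 ≤ l.length)]
    have hlenlt : l'.length < l.length := by omega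
    have hlenpos : 0 < l'.length := by omega
    -- head of l'
    have hhead' : l'.head? = some s := by
      rw [List.head?_eq_getElem?, hl', List.getElem?_append_left
        (by simp [Nat.min_eq_left (by omega : (i : ℕ) + 1 ≤ l.length)]),
        List.getElem?_take]
      rw [if_pos (by omega)]
      rw [List.head?_eq_getElem?] at hh
      exact hh
    -- last of l'
    have hlast' : l'.getLast? = some t := by
      rw [List.getLast?_eq_getElem?, hl']
      have htk : (l.take ((i : ℕ) + 1)).length = (i : ℕ) + 1 := by
        simp [Nat.min_eq_left (by omega : (i : ℕ) + 1 ≤ l.length)]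
      rw [List.getElem?_append_right (by rw [htk]; simp [hl'] at hlen' ⊢; omega)]
      rw [htk, List.getElem?_drop]
      have : (j : ℕ) + ((l.take ((i:ℕ)+1) ++ l.drop (j:ℕ)).length - 1 - ((i : ℕ) + 1))
          = l.length - 1 := by rw [← hl', hlen']; omega
      rw [this]
      rw [List.getLast?_eq_getElem?] at hlast
      exact hlast
    -- chain'
    have hchain' : l'.Chain' E := by
      rw [hl']; change List.IsChain E _; rw [List.isChain_append]
      refine ⟨hc.take _, hc.drop _, ?_⟩
      intro x hx y hy
      have hxg : (l.take ((i : ℕ) + 1)).getLast? = some l[(i : ℕ)] := by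
        rw [List.getLast?_eq_getElem?, List.getElem?_take]
        have htk : (l.take ((i : ℕ) + 1)).length = (i : ℕ) + 1 := by
          simp [Nat.min_eq_left (by omega : (i : ℕ) + 1 ≤ l.length)]
        rw [htk, if_pos (by omega)]
        simp [List.getElem?_eq_getElem hi]
      have hyg : (l.drop (j : ℕ)).head? = some l[(j : ℕ)] := by
        rw [List.head?_eq_getElem?, List.getElem?_drop]
        simp [List.getElem?_eq_getElem (by omega : (j : ℕ) + 0 < l.length)]
      rw [hxg] at hx; rw [hyg] at hy
      obtain rfl : l[(i : ℕ)] = x := by simpa using hx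
      obtain rfl : l[(j : ℕ)] = y := by simpa using hy
      simpa [List.get_eq_getElem] using hE
    -- shorter path: contradiction with sInf
    have hmem : l'.length - 1 ∈ T := by
      exact ⟨l', ⟨List.ne_nil_of_length_pos hlenpos, hchain'⟩, hhead', hlast',
        by omega⟩
    have : gdist E s t ≤ l'.length - 1 := Nat.sInf_le hmem
    omega
end

section
/- Let G = (S,E) be a finite directed graph and let (U,s) be a spine-set of G, i.e., U is the vertex set of a chordless path of G ending in s. Then every vertex of U that is reachable from s belongs to the strongly connected component of s; that is, FW(s) intersected with U is contained in SCC(s). -/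
lemma mem_reaches_last {S : Type*} (E : S → S → Prop) :
    ∀ l : List S, l.Chain' E → ∀ x ∈ l, ∀ s, l.getLast? = some s →
      Relation.ReflTransGen E x s := by
  intro l
  induction l with
  | nil => intro _ x hx; simp at hx
  | cons a t ih =>
    intro hch x hx s hlast
    cases t with
    | nil =>
      simp at hx hlast
      subst hx; subst hlast; exact Relation.ReflTransGen.refl
    | cons b t' =>
      replace hch := List.isChain_cons_cons.mp hch
      have hlast' : (b :: t').getLast? = some s := by
        simpa [List.getLast?_cons_cons] using hlast
      rcases List.mem_cons.mp hx with rfl | hx'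
      · exact Relation.ReflTransGen.head hch.1
          (ih hch.2 b List.mem_cons_self s hlast')
      · exact ih hch.2 x hx' s hlast'

/-- If `(U, s)` is a spine-set, then every vertex of `U` reachable from
`s` lies in the strongly connected component of `s`. -/
theorem stmt14 {S : Type*} [Fintype S] (E : S → S → Prop) (U : Set S) (s : S)
    (h : IsSpineSet E U s) :
    FW E s ∩ U ⊆
      {t | Relation.ReflTransGen E s t ∧ Relation.ReflTransGen E t s} := by
  rintro t ⟨hts, htU⟩
  obtain ⟨l, ⟨hne, hch⟩, _, hlast, hU⟩ := h
  refine ⟨hts, ?_⟩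
  exact mem_reaches_last E l hch t (by rwa [hU] at htU) s hlast
end
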